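/- arXiv:2202.03431 — 5 statements merged into one kernel-verified Lean document; each statement's English description precedes it below -/
import Mathlib

section
/- Suppose G = K_{2,l} and G' = K_{2,l+1}. If L is a balanced m-assignment for G with m ≥ 3 such that P(G,L) < P(G,m), and there is an ε ∈ (0,2) such that ⌊l/4⌋ > max{ ln(ε/(2(m−2))) / (2·ln((m−2)/(m−1))), ln((2−ε)/4) / ln(1 − 1/(m−1)²) }, then there is a balanced m-assignment L' for G' such that P(G',L') < P(G',m). -/
/-- A proper coloring of the graph `G` from the list assignment `L` (colors are
natural numbers): every vertex gets a color from its list, and adjacent vertices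
get different colors. -/
def IsProperListColoring {V : Type*} (G : SimpleGraph V) (L : V → Finset ℕ) (f : V → ℕ) : Prop :=
  (∀ v, f v ∈ L v) ∧ ∀ ⦃u w⦄, G.Adj u w → f u ≠ f w

/-- `P(G, L)`: the number of proper `L`-colorings of `G`. -/
noncomputable def numListColorings {V : Type*} (G : SimpleGraph V) (L : V → Finset ℕ) : ℕ :=
  {f : V → ℕ | IsProperListColoring G L f}.ncard

/-- `P(G, m)`: the chromatic polynomial of `G` evaluated at `m`, i.e. the number of
proper colorings of `G` using colors from `{1, …, m}`. -/
noncomputable def chromPoly {V : Type*} (G : SimpleGraph V) (m : ℕ) : ℕ :=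
  numListColorings G fun _ => Finset.Icc 1 m

/-- `L` is an `m`-assignment: every list has size `m`. -/
def IsAssignment {V : Type*} (L : V → Finset ℕ) (m : ℕ) : Prop :=
  ∀ v, (L v).card = m

/-- `P_ℓ(G, m)`: the list color function, the minimum of `P(G, L)` over all
`m`-assignments `L` for `G`. -/
noncomputable def listColorFunction {V : Type*} (G : SimpleGraph V) (m : ℕ) : ℕ :=
  sInf {p | ∃ L : V → Finset ℕ, IsAssignment L m ∧ numListColorings G L = p}

/-- `χ(G)`: the chromatic number, the least `m` admitting a proper coloring with
colors from `{1, …, m}`. -/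
noncomputable def chromNum {V : Type*} (G : SimpleGraph V) : ℕ :=
  sInf {m | 0 < chromPoly G m}

/-- `χ_ℓ(G)`: the list chromatic number, the least `k` such that `G` has a proper
`L`-coloring for every `k`-assignment `L`. -/
noncomputable def listChromNum {V : Type*} (G : SimpleGraph V) : ℕ :=
  sInf {k | ∀ L : V → Finset ℕ, IsAssignment L k → ∃ f, IsProperListColoring G L f}

/-- `τ(G)`: the list color function threshold, the least `k ≥ χ(G)` such that
`P_ℓ(G, m) = P(G, m)` whenever `m ≥ k`. -/
noncomputable def lcfThreshold {V : Type*} (G : SimpleGraph V) : ℕ :=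
  sInf {k | chromNum G ≤ k ∧ ∀ m, k ≤ m → listColorFunction G m = chromPoly G m}

/-- The complete bipartite graph `K_{2,l}`. -/
def K2l (l : ℕ) : SimpleGraph (Fin 2 ⊕ Fin l) := completeBipartiteGraph (Fin 2) (Fin l)

/-- The four possible lists on the `y`-vertices in a balanced `m`-assignment. -/
def balSet (m : ℕ) : Fin 4 → Finset ℕ :=
  ![Finset.Icc 1 (m - 2) ∪ {m - 1, m + 1}, Finset.Icc 1 (m - 2) ∪ {m - 1, m + 2},
    Finset.Icc 1 (m - 2) ∪ {m, m + 1}, Finset.Icc 1 (m - 2) ∪ {m, m + 2}]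

/-- `z_{i+1}`: the number of `y`-vertices of `K_{2,l}` whose list is `balSet m i`. -/
def zCount {l : ℕ} (L : Fin 2 ⊕ Fin l → Finset ℕ) (m : ℕ) (i : Fin 4) : ℕ :=
  (Finset.univ.filter fun j : Fin l => L (Sum.inr j) = balSet m i).card

/-- A balanced `m`-assignment for `K_{2,l}`: an `m`-assignment with
`L(x_1) = [m]`, `L(x_2) = [m-2] ∪ {m+1, m+2}`, `z_1 + z_2 + z_3 + z_4 = l`,
and `|z_i - z_j| ≤ 1` for all `i, j ∈ [4]`. -/
def IsBalanced {l : ℕ} (m : ℕ) (L : Fin 2 ⊕ Fin l → Finset ℕ) : Prop :=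
  IsAssignment L m ∧
  L (Sum.inl 0) = Finset.Icc 1 m ∧
  L (Sum.inl 1) = Finset.Icc 1 (m - 2) ∪ {m + 1, m + 2} ∧
  (∑ i : Fin 4, zCount L m i) = l ∧
  ∀ i j : Fin 4, |(zCount L m i : ℤ) - (zCount L m j : ℤ)| ≤ 1

/-!
Colouring `x₁, x₂` first gives `P(K_{2,n}, L) = ∑_{c₁, c₂} ∏_j |L(y_j) \ {c₁, c₂}|`. For a
balanced assignment this is an explicit polynomial in `m` and the type counts `z_i`, while
`P(K_{2,n}, m) = m ((m-1)^n + (m-1)(m-2)^n)`. Give the new vertex `y_{l+1}` the list of a least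
frequent type `t`; exchanging `m - 1 ↔ m` or `m + 1 ↔ m + 2` permutes the types, so we may take
`t = 0`. Then `P(G', L') = (m-2) P(G, L) + (m-2)(m-1)^l + E` and
`P(G', m) = (m-2) P(G, m) + m (m-1)^l`, so it suffices that `E ≤ 2 (m-1)^l`. Relative to
`(m-1)^l`, every summand of `E` carries a power `((m-2)/(m-1))^{2⌊l/4⌋}` or
`(1 - 1/(m-1)^2)^{⌊l/4⌋}`, and the two bounds on `⌊l/4⌋` make these parts at most `ε (m-1)^l`
and `(2-ε)(m-1)^l`.
-/

open Finset

theorem isProperListColoring_K2l_iff {n : ℕ} {L : Fin 2 ⊕ Fin n → Finset ℕ}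
    {f : Fin 2 ⊕ Fin n → ℕ} :
    IsProperListColoring (K2l n) L f ↔
      (∀ v, f v ∈ L v) ∧ ∀ i j, f (Sum.inl i) ≠ f (Sum.inr j) := by
  refine and_congr_right fun _ => ⟨fun h i j => h (by simp [K2l]), fun h => ?_⟩
  rintro (i | j) (i' | j') hadj
  · simp [K2l] at hadj
  · exact h i j'
  · exact (h i' j).symm
  · simp [K2l] at hadj

theorem numListColorings_K2l (n : ℕ) (L : Fin 2 ⊕ Fin n → Finset ℕ) :
    numListColorings (K2l n) L =
      ∑ c₁ ∈ L (Sum.inl 0), ∑ c₂ ∈ L (Sum.inl 1), ∏ j, #(L (Sum.inr j) \ {c₁, c₂}) := by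
  classical
  let T := (L (Sum.inl 0) ×ˢ L (Sum.inl 1)).sigma
    fun p => Fintype.piFinset fun j => L (Sum.inr j) \ {p.1, p.2}
  have hT : #T = ∑ c₁ ∈ L (Sum.inl 0), ∑ c₂ ∈ L (Sum.inl 1),
      ∏ j, #(L (Sum.inr j) \ {c₁, c₂}) := by
    simp only [T, card_sigma, sum_product, Fintype.card_piFinset]
  rw [← hT, numListColorings, ← Set.ncard_coe_finset]
  refine Set.ncard_congr (fun f _ => ⟨(f (Sum.inl 0), f (Sum.inl 1)), f ∘ Sum.inr⟩) ?_ ?_ ?_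
  · intro f hf
    obtain ⟨hmem, hne⟩ := isProperListColoring_K2l_iff.mp hf
    simp only [T, coe_sigma, Set.mem_sigma_iff, coe_product, Set.mem_prod, mem_coe,
      Fintype.coe_piFinset, Set.mem_pi, Set.mem_univ, true_implies, Function.comp_apply,
      mem_sdiff, mem_insert, mem_singleton]
    exact ⟨⟨hmem _, hmem _⟩, fun j => ⟨hmem _, by
      rintro (h | h)
      exacts [hne 0 j h.symm, hne 1 j h.symm]⟩⟩
  · intro f g _ _ hfg
    simp only [Sigma.mk.injEq, Prod.mk.injEq, heq_eq_eq] at hfg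
    obtain ⟨⟨h₀, h₁⟩, hr⟩ := hfg
    funext v
    rcases v with i | j
    · fin_cases i
      exacts [h₀, h₁]
    · exact congrFun hr j
  · rintro ⟨⟨c₁, c₂⟩, g⟩ hp
    simp only [T, coe_sigma, Set.mem_sigma_iff, coe_product, Set.mem_prod, mem_coe,
      Fintype.coe_piFinset, Set.mem_pi, Set.mem_univ, true_implies, mem_sdiff, mem_insert,
      mem_singleton, not_or] at hp
    obtain ⟨⟨h₁, h₂⟩, hg⟩ := hp
    refine ⟨Sum.elim ![c₁, c₂] g, isProperListColoring_K2l_iff.mpr ⟨?_, ?_⟩, rfl⟩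
    · rintro (i | j)
      · fin_cases i
        exacts [h₁, h₂]
      · exact (hg j).1
    · intro i j
      fin_cases i
      exacts [fun h => (hg j).2.1 h.symm, fun h => (hg j).2.2 h.symm]

theorem cast_card_sdiff_pair {α R : Type*} [DecidableEq α] [AddGroupWithOne R] (S : Finset α)
    (a b : α) :
    (#(S \ {a, b}) : R) =
      #S - (if b ∈ S then 1 else 0) - (if a ∈ S ∧ a ≠ b then 1 else 0) := by
  rw [sdiff_insert, ← erase_eq]
  by_cases ha : a ∈ S ∧ a ≠ b
  · rw [cast_card_erase_of_mem (by simpa [mem_erase] using ha.symm), if_pos ha]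
    split_ifs with hb
    · rw [cast_card_erase_of_mem hb]
    · rw [erase_eq_of_notMem hb, sub_zero]
  · rw [erase_eq_of_notMem (by simpa [mem_erase, and_comm] using ha), if_neg ha, sub_zero]
    split_ifs with hb
    · rw [cast_card_erase_of_mem hb]
    · rw [erase_eq_of_notMem hb, sub_zero]

theorem prod_comp_eq_prod_pow_card {ι τ κ M : Type*} [Fintype ι] [Fintype τ] [DecidableEq κ]
    [CommMonoid M] {g : ι → κ} {B : τ → κ} (hB : Function.Injective B)
    (hg : ∀ j, ∃ i, g j = B i) (f : κ → M) :
    ∏ j, f (g j) = ∏ i, f (B i) ^ #{j | g j = B i} := by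
  classical
  choose σ hσ using hg
  have hfib : ∀ i, univ.filter (fun j => g j = B i) = univ.filter (fun j => σ j = i) :=
    fun i => filter_congr fun j _ => by rw [hσ j, hB.eq_iff]
  calc ∏ j, f (g j) = ∏ j, f (B (σ j)) := by simp only [hσ]
    _ = ∏ i, ∏ j with σ j = i, f (B i) := (prod_fiberwise' _ σ fun i => f (B i)).symm
    _ = _ := by simp only [prod_const, hfib]

section BalSet

variable {m c : ℕ} {i : Fin 4}

theorem mem_balSet_of_mem_Icc (hc : c ∈ Icc 1 (m - 2)) : c ∈ balSet m i := by
  fin_cases i <;> simp [balSet, hc]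

theorem sub_one_mem_balSet_iff (hm : 1 ≤ m) : m - 1 ∈ balSet m i ↔ i = 0 ∨ i = 1 := by
  fin_cases i <;> simp [balSet] <;> omega

theorem self_mem_balSet_iff (hm : 1 ≤ m) : m ∈ balSet m i ↔ i = 2 ∨ i = 3 := by
  fin_cases i <;> simp [balSet] <;> omega

theorem add_one_mem_balSet_iff : m + 1 ∈ balSet m i ↔ i = 0 ∨ i = 2 := by
  fin_cases i <;> simp [balSet]
  omega

theorem add_two_mem_balSet_iff : m + 2 ∈ balSet m i ↔ i = 1 ∨ i = 3 := by
  fin_cases i <;> simp [balSet] <;> omega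

theorem balSet_injective (hm : 1 ≤ m) : Function.Injective (balSet m) := by
  intro i j h
  have hs : m ∈ balSet m i ↔ m ∈ balSet m j := by rw [h]
  have ha : m + 1 ∈ balSet m i ↔ m + 1 ∈ balSet m j := by rw [h]
  rw [self_mem_balSet_iff hm, self_mem_balSet_iff hm] at hs
  rw [add_one_mem_balSet_iff, add_one_mem_balSet_iff] at ha
  fin_cases i <;> fin_cases j <;> simp_all

theorem card_Icc_union_pair (hm : 2 ≤ m) {u v : ℕ} (hu : m - 2 < u) (hv : m - 2 < v)
    (huv : u ≠ v) : #(Icc 1 (m - 2) ∪ {u, v}) = m := by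
  rw [card_union_of_disjoint (by simp [disjoint_left]; omega), Nat.card_Icc, card_pair huv]
  omega

theorem card_balSet (hm : 2 ≤ m) (i : Fin 4) : #(balSet m i) = m := by
  fin_cases i <;> exact card_Icc_union_pair hm (by omega) (by omega) (by omega)

end BalSet

theorem exists_balSet_eq_of_sum_zCount {n m : ℕ} (hm : 1 ≤ m)
    {L : Fin 2 ⊕ Fin n → Finset ℕ} (hz : ∑ i, zCount L m i = n) (j : Fin n) :
    ∃ i, L (Sum.inr j) = balSet m i := by
  have hcover : univ.biUnion (fun i => ({j | L (Sum.inr j) = balSet m i} : Finset (Fin n)))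
      = univ := by
    refine eq_univ_of_card _ ?_
    rw [card_biUnion, Fintype.card_fin]
    · exact hz
    · intro i _ i' _ hne
      exact disjoint_filter.mpr fun j _ h h' => hne (balSet_injective hm (h.symm.trans h'))
  have hj := mem_univ j
  rw [← hcover, mem_biUnion] at hj
  obtain ⟨i, -, hi⟩ := hj
  exact ⟨i, (mem_filter.mp hi).2⟩

section Polynomials

variable {R : Type*} [CommRing R]

/-- The summands are the contributions of the colour pairs `(c₁, c₂)` of `(x₁, x₂)`, in the
classes `c₁ = c₂ ∈ [m-2]`; `c₁ ≠ c₂` in `[m-2]`; `c₁ ∈ [m-2]` and `c₂ = m+1`, `m+2`;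
`c₂ ∈ [m-2]` and `c₁ = m-1`, `m`; and the four pairs of `{m-1, m} × {m+1, m+2}`. -/
def balancedListPoly (x : R) (z : Fin 4 → ℕ) : R :=
  (x - 2) * ∏ i, (x - 1) ^ z i + (x - 2) * (x - 3) * ∏ i, (x - 2) ^ z i
    + (x - 2) * ∏ i, ![x - 2, x - 1, x - 2, x - 1] i ^ z i
    + (x - 2) * ∏ i, ![x - 1, x - 2, x - 1, x - 2] i ^ z i
    + (x - 2) * ∏ i, ![x - 2, x - 2, x - 1, x - 1] i ^ z i
    + (x - 2) * ∏ i, ![x - 1, x - 1, x - 2, x - 2] i ^ z i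
    + ∏ i, ![x - 2, x - 1, x - 1, x] i ^ z i
    + ∏ i, ![x - 1, x - 2, x, x - 1] i ^ z i
    + ∏ i, ![x - 1, x, x - 2, x - 1] i ^ z i
    + ∏ i, ![x, x - 1, x - 1, x - 2] i ^ z i

def k2lChromPoly (x : R) (n : ℕ) : R :=
  x * ((x - 1) ^ n + (x - 1) * (x - 2) ^ n)

/-- A new vertex with list `balSet m 0` leaves `m - 2` colours to every pair `c₁ ≠ c₂` of
its colours; this is the surplus of the pairs with `c₁ = m` or `c₂ = m + 2`. -/
def balancedExcess (x : R) (z : Fin 4 → ℕ) : R :=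
  (x - 2) * ∏ i, ![x - 1, x - 2, x - 1, x - 2] i ^ z i
    + (x - 2) * ∏ i, ![x - 1, x - 1, x - 2, x - 2] i ^ z i
    + ∏ i, ![x - 1, x, x - 2, x - 1] i ^ z i
    + ∏ i, ![x - 1, x - 2, x, x - 1] i ^ z i
    + 2 * ∏ i, ![x, x - 1, x - 1, x - 2] i ^ z i

/-- Swapping the colours `m - 1 ↔ m` and `m + 1 ↔ m + 2` permutes the four types of lists
by `i ↦ t ^^^ i`. -/
theorem balancedListPoly_comp_xor (x : R) (z : Fin 4 → ℕ) (t : Fin 4) :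
    balancedListPoly x (fun i => z (t ^^^ i)) = balancedListPoly x z := by
  fin_cases t <;> simp [balancedListPoly, Fin.prod_univ_four] <;> ring

theorem balancedListPoly_add_single_zero (x : R) (z : Fin 4 → ℕ) :
    balancedListPoly x (z + Pi.single 0 1) =
      (x - 2) * balancedListPoly x z + (x - 2) * (x - 1) ^ (∑ i, z i)
        + balancedExcess x z := by
  simp [balancedListPoly, balancedExcess, Fin.prod_univ_four, Fin.sum_univ_four, pow_succ]
  ring

theorem k2lChromPoly_succ (x : R) (n : ℕ) :
    k2lChromPoly x (n + 1) = (x - 2) * k2lChromPoly x n + x * (x - 1) ^ n := by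
  simp only [k2lChromPoly]
  ring

theorem cast_chromPoly_K2l (n m : ℕ) : (chromPoly (K2l n) m : R) = k2lChromPoly (m : R) n := by
  have hcard : (#(Icc 1 m) : R) = m := by simp
  have hrow : ∀ c ∈ Icc 1 m, ∑ c₂ ∈ Icc 1 m, ∏ _j : Fin n, (#(Icc 1 m \ {c, c₂}) : R)
      = ((m : R) - 1) ^ n + ((m : R) - 1) * ((m : R) - 2) ^ n := by
    intro c hc
    have hoff : ∀ c₂ ∈ (Icc 1 m).erase c, ∏ _j : Fin n, (#(Icc 1 m \ {c, c₂}) : R)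
        = ((m : R) - 2) ^ n := by
      intro c₂ h₂
      obtain ⟨hne, h₂⟩ := mem_erase.mp h₂
      rw [prod_const, cast_card_sdiff_pair, if_pos h₂, if_pos ⟨hc, hne.symm⟩, hcard]
      simp only [card_univ, Fintype.card_fin]
      ring
    rw [← add_sum_erase _ _ hc, sum_congr rfl hoff, sum_const, nsmul_eq_mul,
      cast_card_erase_of_mem hc, hcard, prod_const, cast_card_sdiff_pair, if_pos hc, hcard]
    simp
  rw [chromPoly, numListColorings_K2l]
  push_cast
  rw [sum_congr rfl hrow, sum_const, nsmul_eq_mul, hcard, k2lChromPoly]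

end Polynomials

section ClosedForms

variable {R : Type*} [CommRing R] {m : ℕ} (z : Fin 4 → ℕ)

def balPairWeight (m : ℕ) (z : Fin 4 → ℕ) (c₁ c₂ : ℕ) : R :=
  ∏ i, (#(balSet m i \ {c₁, c₂}) : R) ^ z i

theorem cast_card_Icc_one_sub_two (hm : 2 ≤ m) : (#(Icc 1 (m - 2)) : R) = m - 2 := by
  rw [Nat.card_Icc, Nat.add_sub_cancel, Nat.cast_sub hm, Nat.cast_two]

theorem balPairWeight_of_ne (hm : 2 ≤ m) {c₁ c₂ : ℕ} (hne : c₁ ≠ c₂) {v : Fin 4 → R}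
    (h : ∀ i, (m : R) - (if c₂ ∈ balSet m i then 1 else 0)
      - (if c₁ ∈ balSet m i then 1 else 0) = v i) :
    balPairWeight m z c₁ c₂ = ∏ i, v i ^ z i :=
  Fintype.prod_congr _ _ fun i => by
    rw [cast_card_sdiff_pair, card_balSet hm, ← h]
    simp only [hne, ne_eq, not_false_eq_true, and_true]

theorem sum_balPairWeight_of_mem_Icc (hm : 3 ≤ m) {c : ℕ} (hc : c ∈ Icc 1 (m - 2)) :
    ∑ c₂ ∈ Icc 1 (m - 2) ∪ {m + 1, m + 2}, (balPairWeight m z c c₂ : R) =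
      ∏ i, ((m : R) - 1) ^ z i + ((m : R) - 3) * ∏ i, ((m : R) - 2) ^ z i
        + ∏ i, ![(m : R) - 2, m - 1, m - 2, m - 1] i ^ z i
        + ∏ i, ![(m : R) - 1, m - 2, m - 1, m - 2] i ^ z i := by
  have hc' := mem_Icc.mp hc
  have hdiag : (balPairWeight m z c c : R) = ∏ i, ((m : R) - 1) ^ z i :=
    Fintype.prod_congr _ _ fun i => by
      rw [cast_card_sdiff_pair, card_balSet (by omega)]
      simp [mem_balSet_of_mem_Icc hc]
  have hoff : ∀ c₂ ∈ (Icc 1 (m - 2)).erase c,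
      (balPairWeight m z c c₂ : R) = ∏ i, ((m : R) - 2) ^ z i := fun c₂ h₂ =>
    balPairWeight_of_ne z (by omega) (mem_erase.mp h₂).1.symm fun i => by
      simp [mem_balSet_of_mem_Icc hc, mem_balSet_of_mem_Icc (mem_erase.mp h₂).2]
      ring
  rw [sum_union (by simp [disjoint_left]; omega), sum_pair (by omega), ← add_sum_erase _ _ hc,
    hdiag, sum_congr rfl hoff, sum_const, nsmul_eq_mul, cast_card_erase_of_mem hc,
    cast_card_Icc_one_sub_two (by omega),
    balPairWeight_of_ne z (by omega) (by omega) (v := ![(m : R) - 2, m - 1, m - 2, m - 1])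
      fun i => by
        fin_cases i <;> simp [mem_balSet_of_mem_Icc hc, add_one_mem_balSet_iff] <;> ring,
    balPairWeight_of_ne z (by omega) (by omega) (v := ![(m : R) - 1, m - 2, m - 1, m - 2])
      fun i => by
        fin_cases i <;> simp [mem_balSet_of_mem_Icc hc, add_two_mem_balSet_iff] <;> ring]
  ring

theorem sum_balPairWeight_sub_one (hm : 3 ≤ m) :
    ∑ c₂ ∈ Icc 1 (m - 2) ∪ {m + 1, m + 2}, (balPairWeight m z (m - 1) c₂ : R) =
      ((m : R) - 2) * ∏ i, ![(m : R) - 2, m - 2, m - 1, m - 1] i ^ z i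
        + ∏ i, ![(m : R) - 2, m - 1, m - 1, m] i ^ z i
        + ∏ i, ![(m : R) - 1, m - 2, m, m - 1] i ^ z i := by
  have hrow : ∀ c ∈ Icc 1 (m - 2),
      (balPairWeight m z (m - 1) c : R) = ∏ i, ![(m : R) - 2, m - 2, m - 1, m - 1] i ^ z i :=
    fun c hc => balPairWeight_of_ne z (by omega) (by simp at hc; omega) fun i => by
      fin_cases i <;> simp [mem_balSet_of_mem_Icc hc, sub_one_mem_balSet_iff (by omega : 1 ≤ m)]
        <;> ring
  rw [sum_union (by simp [disjoint_left]; omega), sum_pair (by omega), sum_congr rfl hrow,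
    sum_const, nsmul_eq_mul, cast_card_Icc_one_sub_two (by omega),
    balPairWeight_of_ne z (by omega) (by omega) (v := ![(m : R) - 2, m - 1, m - 1, m])
      fun i => by
        fin_cases i <;> simp [sub_one_mem_balSet_iff (by omega : 1 ≤ m), add_one_mem_balSet_iff]
        ring,
    balPairWeight_of_ne z (by omega) (by omega) (v := ![(m : R) - 1, m - 2, m, m - 1])
      fun i => by
        fin_cases i <;> simp [sub_one_mem_balSet_iff (by omega : 1 ≤ m), add_two_mem_balSet_iff]
        ring]
  ring

theorem sum_balPairWeight_self (hm : 3 ≤ m) :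
    ∑ c₂ ∈ Icc 1 (m - 2) ∪ {m + 1, m + 2}, (balPairWeight m z m c₂ : R) =
      ((m : R) - 2) * ∏ i, ![(m : R) - 1, m - 1, m - 2, m - 2] i ^ z i
        + ∏ i, ![(m : R) - 1, m, m - 2, m - 1] i ^ z i
        + ∏ i, ![(m : R), m - 1, m - 1, m - 2] i ^ z i := by
  have hrow : ∀ c ∈ Icc 1 (m - 2),
      (balPairWeight m z m c : R) = ∏ i, ![(m : R) - 1, m - 1, m - 2, m - 2] i ^ z i :=
    fun c hc => balPairWeight_of_ne z (by omega) (by simp at hc; omega) fun i => by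
      fin_cases i <;> simp [mem_balSet_of_mem_Icc hc, self_mem_balSet_iff (by omega : 1 ≤ m)]
        <;> ring
  rw [sum_union (by simp [disjoint_left]; omega), sum_pair (by omega), sum_congr rfl hrow,
    sum_const, nsmul_eq_mul, cast_card_Icc_one_sub_two (by omega),
    balPairWeight_of_ne z (by omega) (by omega) (v := ![(m : R) - 1, m, m - 2, m - 1])
      fun i => by
        fin_cases i <;> simp [self_mem_balSet_iff (by omega : 1 ≤ m), add_one_mem_balSet_iff]
        ring,
    balPairWeight_of_ne z (by omega) (by omega) (v := ![(m : R), m - 1, m - 1, m - 2])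
      fun i => by
        fin_cases i <;> simp [self_mem_balSet_iff (by omega : 1 ≤ m), add_two_mem_balSet_iff]
        ring]
  ring

theorem sum_sum_balPairWeight (hm : 3 ≤ m) :
    ∑ c₁ ∈ Icc 1 m, ∑ c₂ ∈ Icc 1 (m - 2) ∪ {m + 1, m + 2},
      (balPairWeight m z c₁ c₂ : R) = balancedListPoly (m : R) z := by
  have hIcc : Icc 1 m = Icc 1 (m - 2) ∪ {m - 1, m} := by ext; simp; omega
  rw [hIcc, sum_union (by simp [disjoint_left]; omega), sum_pair (by omega),
    sum_congr rfl fun c hc => sum_balPairWeight_of_mem_Icc z hm hc, sum_const, nsmul_eq_mul,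
    cast_card_Icc_one_sub_two (by omega), sum_balPairWeight_sub_one z hm,
    sum_balPairWeight_self z hm, balancedListPoly]
  ring

theorem cast_numListColorings_K2l_of_balanced {n : ℕ} (hm : 3 ≤ m)
    {L : Fin 2 ⊕ Fin n → Finset ℕ} (h₀ : L (Sum.inl 0) = Icc 1 m)
    (h₁ : L (Sum.inl 1) = Icc 1 (m - 2) ∪ {m + 1, m + 2}) (hz : ∑ i, zCount L m i = n) :
    (numListColorings (K2l n) L : R) = balancedListPoly (m : R) (zCount L m) := by
  rw [numListColorings_K2l, h₀, h₁, ← sum_sum_balPairWeight _ hm]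
  push_cast
  refine sum_congr rfl fun c₁ _ => sum_congr rfl fun c₂ _ => ?_
  exact prod_comp_eq_prod_pow_card (balSet_injective (by omega))
    (exists_balSet_eq_of_sum_zCount (by omega) hz) fun S => (#(S \ {c₁, c₂}) : R)

end ClosedForms

section Estimates

open Real

theorem pow_lt_of_log_div_log_lt {r c : ℝ} (hr₀ : 0 < r) (hr₁ : r < 1) (hc : 0 < c) {n : ℕ}
    (hn : log c / log r < n) : r ^ n < c := by
  rw [← log_lt_log_iff (pow_pos hr₀ n) hc, log_pow]
  rw [div_lt_iff_of_neg (log_neg hr₀ hr₁)] at hn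
  exact hn

variable {x ε : ℝ} {q : ℕ}

theorem sub_two_mul_pow_le (hx : 3 ≤ x) (hε : 0 < ε)
    (hq : log (ε / (2 * (x - 2))) / (2 * log ((x - 2) / (x - 1))) < q) {w : ℕ}
    (hw : 2 * q ≤ w) :
    (x - 2) * (x - 2) ^ w ≤ ε / 2 * (x - 1) ^ w := by
  have hX : 0 < x - 2 := by linarith
  have hr₀ : 0 < (x - 2) / (x - 1) := div_pos hX (by linarith)
  have hr₁ : (x - 2) / (x - 1) < 1 := (div_lt_one (by linarith)).mpr (by linarith)
  have h2q : ((x - 2) / (x - 1)) ^ (2 * q) < ε / (2 * (x - 2)) := by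
    refine pow_lt_of_log_div_log_lt hr₀ hr₁ (by positivity) ?_
    rw [show log (ε / (2 * (x - 2))) / log ((x - 2) / (x - 1))
        = 2 * (log (ε / (2 * (x - 2))) / (2 * log ((x - 2) / (x - 1)))) by field_simp]
    push_cast
    linarith
  have hrw := (pow_le_pow_of_le_one hr₀.le hr₁.le hw).trans_lt h2q
  rw [div_pow, div_lt_div_iff₀ (pow_pos (by linarith) w) (by linarith)] at hrw
  nlinarith

theorem sub_two_mul_self_pow_le (hx : 3 ≤ x) (hε : ε < 2)
    (hq : log ((2 - ε) / 4) / log (1 - 1 / (x - 1) ^ 2) < q) {w : ℕ} (hw : q ≤ w) :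
    ((x - 2) * x) ^ w ≤ (2 - ε) / 4 * (x - 1) ^ (2 * w) := by
  have hY : 0 < (x - 1) ^ 2 := by nlinarith
  have hρ : 1 - 1 / (x - 1) ^ 2 = (x - 2) * x / (x - 1) ^ 2 := by
    rw [eq_div_iff hY.ne', sub_mul, one_div_mul_cancel hY.ne']
    ring
  have hρ₀ : 0 < (x - 2) * x / (x - 1) ^ 2 := div_pos (by nlinarith) hY
  have hρ₁ : (x - 2) * x / (x - 1) ^ 2 < 1 := (div_lt_one hY).mpr (by nlinarith)
  rw [hρ] at hq
  have hrw := (pow_le_pow_of_le_one hρ₀.le hρ₁.le hw).trans_lt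
    (pow_lt_of_log_div_log_lt hρ₀ hρ₁ (by linarith) hq)
  rw [div_pow, div_lt_iff₀ (pow_pos hY w), ← pow_mul] at hrw
  exact hrw.le

theorem sub_two_pow_mul_pow_add_le (hx : 3 ≤ x) (hε : ε < 2)
    (hq : log ((2 - ε) / 4) / log (1 - 1 / (x - 1) ^ 2) < q) {b c : ℕ} (hqb : q ≤ b)
    (hqc : q ≤ c) (hbc : b ≤ c + 1) (hcb : c ≤ b + 1) :
    (x - 2) ^ c * x ^ b + (x - 2) ^ b * x ^ c ≤ (2 - ε) / 2 * (x - 1) ^ (b + c) := by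
  wlog hle : b ≤ c generalizing b c
  · rw [add_comm, add_comm b]
    exact this hqc hqb hcb hbc (by omega)
  obtain ⟨e, rfl⟩ := Nat.exists_eq_add_of_le hle
  have he : (x - 2) ^ e + x ^ e = 2 * (x - 1) ^ e := by
    obtain rfl | rfl : e = 0 ∨ e = 1 := by omega
    all_goals ring
  calc (x - 2) ^ (b + e) * x ^ b + (x - 2) ^ b * x ^ (b + e)
      = ((x - 2) * x) ^ b * ((x - 2) ^ e + x ^ e) := by rw [mul_pow]; ring
    _ = 2 * (x - 1) ^ e * ((x - 2) * x) ^ b := by rw [he]; ring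
    _ ≤ 2 * (x - 1) ^ e * ((2 - ε) / 4 * (x - 1) ^ (2 * b)) :=
        mul_le_mul_of_nonneg_left (sub_two_mul_self_pow_le hx hε hq hqb)
          (mul_nonneg zero_le_two (pow_nonneg (by linarith) e))
    _ = (2 - ε) / 2 * (x - 1) ^ (b + (b + e)) := by ring

theorem pow_mul_sub_two_pow_le (hx : 3 ≤ x) (hε : ε < 2)
    (hq : log ((2 - ε) / 4) / log (1 - 1 / (x - 1) ^ 2) < q) {a d : ℕ} (hqa : q ≤ a)
    (had : a ≤ d) :
    x ^ a * (x - 2) ^ d ≤ (2 - ε) / 4 * (x - 1) ^ (a + d) := by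
  obtain ⟨e, rfl⟩ := Nat.exists_eq_add_of_le had
  calc x ^ a * (x - 2) ^ (a + e) = ((x - 2) * x) ^ a * (x - 2) ^ e := by rw [mul_pow]; ring
    _ ≤ (2 - ε) / 4 * (x - 1) ^ (2 * a) * (x - 1) ^ e :=
        mul_le_mul (sub_two_mul_self_pow_le hx hε hq hqa)
          (pow_le_pow_left₀ (by linarith) (by linarith) e) (pow_nonneg (by linarith) e)
          (mul_nonneg (by linarith) (pow_nonneg (by linarith) _))
    _ = (2 - ε) / 4 * (x - 1) ^ (a + (a + e)) := by ring

theorem balancedExcess_le (hx : 3 ≤ x) (hε : ε ∈ Set.Ioo 0 2)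
    (hq : max (log (ε / (2 * (x - 2))) / (2 * log ((x - 2) / (x - 1))))
      (log ((2 - ε) / 4) / log (1 - 1 / (x - 1) ^ 2)) < q)
    {z : Fin 4 → ℕ} (hqz : q ≤ z 0) (hz : ∀ i, z 0 ≤ z i ∧ z i ≤ z 0 + 1) :
    balancedExcess x z ≤ 2 * (x - 1) ^ (∑ i, z i) := by
  obtain ⟨hq₁, hq₂⟩ := max_lt_iff.mp hq
  obtain ⟨hε₀, hε₂⟩ := hε
  have hY : 0 ≤ x - 1 := by linarith
  obtain ⟨h1, h1'⟩ := hz 1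
  obtain ⟨h2, h2'⟩ := hz 2
  obtain ⟨h3, h3'⟩ := hz 3
  simp only [balancedExcess, Fin.prod_univ_four, Fin.sum_univ_four, Matrix.cons_val_zero,
    Matrix.cons_val_one, Matrix.cons_val_two, Matrix.cons_val_three, Matrix.head_cons,
    Matrix.tail_cons]
  set a := z 0
  set b := z 1
  set c := z 2
  set d := z 3
  have hT₁ : (x - 2) * ((x - 1) ^ a * (x - 2) ^ b * (x - 1) ^ c * (x - 2) ^ d)
      ≤ ε / 2 * (x - 1) ^ (a + b + c + d) :=
    calc _ = (x - 2) * (x - 2) ^ (b + d) * (x - 1) ^ (a + c) := by ring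
      _ ≤ ε / 2 * (x - 1) ^ (b + d) * (x - 1) ^ (a + c) := by
          gcongr ?_ * _; exact sub_two_mul_pow_le hx hε₀ hq₁ (w := b + d) (by omega)
      _ = _ := by ring
  have hT₂ : (x - 2) * ((x - 1) ^ a * (x - 1) ^ b * (x - 2) ^ c * (x - 2) ^ d)
      ≤ ε / 2 * (x - 1) ^ (a + b + c + d) :=
    calc _ = (x - 2) * (x - 2) ^ (c + d) * (x - 1) ^ (a + b) := by ring
      _ ≤ ε / 2 * (x - 1) ^ (c + d) * (x - 1) ^ (a + b) := by
          gcongr ?_ * _; exact sub_two_mul_pow_le hx hε₀ hq₁ (w := c + d) (by omega)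
      _ = _ := by ring
  have hT₃₄ : (x - 1) ^ a * x ^ b * (x - 2) ^ c * (x - 1) ^ d
      + (x - 1) ^ a * (x - 2) ^ b * x ^ c * (x - 1) ^ d
        ≤ (2 - ε) / 2 * (x - 1) ^ (a + b + c + d) :=
    calc _ = ((x - 2) ^ c * x ^ b + (x - 2) ^ b * x ^ c) * (x - 1) ^ (a + d) := by ring
      _ ≤ (2 - ε) / 2 * (x - 1) ^ (b + c) * (x - 1) ^ (a + d) := by
          gcongr ?_ * _
          exact sub_two_pow_mul_pow_add_le hx hε₂ hq₂ (by omega) (by omega) (by omega) (by omega)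
      _ = _ := by ring
  have hT₅ : 2 * (x ^ a * (x - 1) ^ b * (x - 1) ^ c * (x - 2) ^ d)
      ≤ (2 - ε) / 2 * (x - 1) ^ (a + b + c + d) :=
    calc _ = 2 * (x ^ a * (x - 2) ^ d) * (x - 1) ^ (b + c) := by ring
      _ ≤ 2 * ((2 - ε) / 4 * (x - 1) ^ (a + d)) * (x - 1) ^ (b + c) := by
          gcongr 2 * ?_ * _
          exact pow_mul_sub_two_pow_le hx hε₂ hq₂ hqz h3
      _ = _ := by ring
  linarith

theorem balancedListPoly_add_single_zero_lt {x ε : ℝ} {q : ℕ} (hx : 3 ≤ x)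
    (hε : ε ∈ Set.Ioo 0 2)
    (hq : max (log (ε / (2 * (x - 2))) / (2 * log ((x - 2) / (x - 1))))
      (log ((2 - ε) / 4) / log (1 - 1 / (x - 1) ^ 2)) < q)
    {z : Fin 4 → ℕ} (hqz : q ≤ z 0) (hz : ∀ i, z 0 ≤ z i ∧ z i ≤ z 0 + 1)
    (hlt : balancedListPoly x z < k2lChromPoly x (∑ i, z i)) :
    balancedListPoly x (z + Pi.single 0 1) < k2lChromPoly x (∑ i, z i + 1) := by
  rw [balancedListPoly_add_single_zero, k2lChromPoly_succ]
  have := balancedExcess_le hx hε hq hqz hz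
  have : (x - 2) * balancedListPoly x z < (x - 2) * k2lChromPoly x (∑ i, z i) :=
    mul_lt_mul_of_pos_left hlt (by linarith)
  linarith

theorem balancedListPoly_add_single_lt {x ε : ℝ} {q n : ℕ} (hx : 3 ≤ x)
    (hε : ε ∈ Set.Ioo 0 2)
    (hq : max (log (ε / (2 * (x - 2))) / (2 * log ((x - 2) / (x - 1))))
      (log ((2 - ε) / 4) / log (1 - 1 / (x - 1) ^ 2)) < q)
    {z : Fin 4 → ℕ} (hn : ∑ i, z i = n) {t : Fin 4} (hqz : q ≤ z t)
    (hz : ∀ i, z t ≤ z i ∧ z i ≤ z t + 1) (hlt : balancedListPoly x z < k2lChromPoly x n) :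
    balancedListPoly x (z + Pi.single t 1) < k2lChromPoly x (n + 1) := by
  subst hn
  set w : Fin 4 → ℕ := fun i => z (t ^^^ i)
  have hw : (fun i => (z + Pi.single t 1 : Fin 4 → ℕ) (t ^^^ i)) = w + Pi.single 0 1 := by
    funext i
    fin_cases t <;> fin_cases i <;> simp [w]
  have hsum : ∑ i, w i = ∑ i, z i := by
    fin_cases t <;> simp [w, Fin.sum_univ_four] <;> omega
  have hw₀ : w 0 = z t := by fin_cases t <;> rfl
  rw [← balancedListPoly_comp_xor _ _ t, hw, ← hsum]
  rw [← balancedListPoly_comp_xor _ _ t, ← hsum] at hlt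
  exact balancedListPoly_add_single_zero_lt hx hε hq (hw₀ ▸ hqz)
    (fun i => hw₀ ▸ hz (t ^^^ i)) hlt

end Estimates

def extendAssignment {l : ℕ} (L : Fin 2 ⊕ Fin l → Finset ℕ) (S : Finset ℕ) :
    Fin 2 ⊕ Fin (l + 1) → Finset ℕ :=
  Sum.elim (fun i => L (Sum.inl i)) (Fin.snoc (fun j => L (Sum.inr j)) S)

theorem zCount_extendAssignment {l m : ℕ} (hm : 1 ≤ m) (L : Fin 2 ⊕ Fin l → Finset ℕ)
    (t : Fin 4) : zCount (extendAssignment L (balSet m t)) m = zCount L m + Pi.single t 1 := by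
  funext i
  simp only [zCount, card_filter, Fin.sum_univ_castSucc, extendAssignment, Sum.elim_inr,
    Fin.snoc_castSucc, Fin.snoc_last, (balSet_injective hm).eq_iff, Pi.add_apply,
    Pi.single_apply, eq_comm]

theorem IsBalanced.zCount_le_add_one {l m : ℕ} {L : Fin 2 ⊕ Fin l → Finset ℕ}
    (hL : IsBalanced m L) (i j : Fin 4) : zCount L m i ≤ zCount L m j + 1 := by
  have := abs_le.mp (hL.2.2.2.2 i j)
  omega

theorem IsBalanced.div_four_le_zCount {l m : ℕ} {L : Fin 2 ⊕ Fin l → Finset ℕ}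
    (hL : IsBalanced m L) (t : Fin 4) : l / 4 ≤ zCount L m t := by
  have hrest : ∑ k ∈ univ.erase t, zCount L m k ≤ 3 * (zCount L m t + 1) := by
    simpa using sum_le_sum fun k (_ : k ∈ univ.erase t) => hL.zCount_le_add_one k t
  have := add_sum_erase univ (zCount L m) (mem_univ t)
  have := hL.2.2.2.1
  omega

theorem IsBalanced.extendAssignment {l m : ℕ} (hm : 2 ≤ m) {L : Fin 2 ⊕ Fin l → Finset ℕ}
    (hL : IsBalanced m L) {t : Fin 4} (ht : ∀ i, zCount L m t ≤ zCount L m i) :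
    IsBalanced m (extendAssignment L (balSet m t)) := by
  have hle := hL.zCount_le_add_one
  obtain ⟨hA, h₀, h₁, hz, -⟩ := hL
  refine ⟨?_, h₀, h₁, ?_, fun i j => ?_⟩
  · rintro (i | j)
    · exact hA _
    · induction j using Fin.lastCases with
      | last => simpa [_root_.extendAssignment] using card_balSet hm t
      | cast j => simpa [_root_.extendAssignment] using hA _
  · simp [zCount_extendAssignment (by omega : 1 ≤ m), sum_add_distrib, hz]
  · have := hle i t
    have := hle j t
    have := ht i
    have := ht j
    rw [zCount_extendAssignment (by omega), abs_le]
    simp only [Pi.add_apply, Pi.single_apply]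
    split_ifs <;> subst_vars <;> omega

/-- Lemma 3 of the paper: if `L` is a balanced `m`-assignment for `G = K_{2,l}` with
`m ≥ 3` and `P(G,L) < P(G,m)`, and there is `ε ∈ (0,2)` with
`⌊l/4⌋ > max{ln(ε/(2(m-2)))/(2 ln((m-2)/(m-1))), ln((2-ε)/4)/ln(1-1/(m-1)²)}`,
then there is a balanced `m`-assignment `L'` for `G' = K_{2,l+1}` with
`P(G',L') < P(G',m)`. -/
theorem exists_balanced_succ (l m : ℕ) (hm : 3 ≤ m)
    (L : Fin 2 ⊕ Fin l → Finset ℕ) (hbal : IsBalanced m L)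
    (hlt : numListColorings (K2l l) L < chromPoly (K2l l) m)
    (ε : ℝ) (hε : ε ∈ Set.Ioo (0 : ℝ) 2)
    (hl : ((l / 4 : ℕ) : ℝ) >
      max (Real.log (ε / (2 * ((m : ℝ) - 2))) / (2 * Real.log (((m : ℝ) - 2) / ((m : ℝ) - 1))))
        (Real.log ((2 - ε) / 4) / Real.log (1 - 1 / ((m : ℝ) - 1) ^ 2))) :
    ∃ L' : Fin 2 ⊕ Fin (l + 1) → Finset ℕ, IsBalanced m L' ∧
      numListColorings (K2l (l + 1)) L' < chromPoly (K2l (l + 1)) m := by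
  obtain ⟨t, -, ht⟩ := exists_min_image univ (zCount L m) univ_nonempty
  have hbal' := hbal.extendAssignment (by omega) fun i => ht i (mem_univ i)
  refine ⟨_, hbal', ?_⟩
  have hquarter := hbal.div_four_le_zCount t
  have hle := hbal.zCount_le_add_one
  obtain ⟨-, h₀, h₁, hz, -⟩ := hbal
  obtain ⟨-, h₀', h₁', hz', -⟩ := hbal'
  rw [← Nat.cast_lt (α := ℝ), cast_numListColorings_K2l_of_balanced hm h₀ h₁ hz,
    cast_chromPoly_K2l] at hlt
  rw [← Nat.cast_lt (α := ℝ), cast_numListColorings_K2l_of_balanced hm h₀' h₁' hz',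
    cast_chromPoly_K2l, zCount_extendAssignment (by omega)]
  exact balancedListPoly_add_single_lt (by exact_mod_cast hm) hε hl hz
    (Nat.cast_le.mpr hquarter) (fun i => ⟨ht i (mem_univ i), hle i t⟩) hlt
end

section
/- Suppose G = K_{2,4t} and m ≥ 3. If t > max{ ln(ε/(4(m−2))) / (2·ln((m−2)/(m−1))), ln((2−ε)/4) / ln(1 − 1/(m−1)²) } for some ε ∈ (0,2), then there is a balanced m-assignment L for G such that P(G,L) < P(G,m). -/
lemma isProper_iff {l : ℕ} (L : Fin 2 ⊕ Fin l → Finset ℕ) (f : Fin 2 ⊕ Fin l → ℕ) :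
    IsProperListColoring (K2l l) L f ↔
      (∀ v, f v ∈ L v) ∧ ∀ (i : Fin 2) (j : Fin l), f (Sum.inl i) ≠ f (Sum.inr j) := by
  constructor
  · rintro ⟨h1, h2⟩
    exact ⟨h1, fun i j => h2 (by simp [K2l])⟩
  · rintro ⟨h1, h2⟩
    refine ⟨h1, ?_⟩
    rintro (i | j) (i' | j') hadj
    · simp [K2l] at hadj
    · exact h2 i j'
    · exact (h2 i' j).symm
    · simp [K2l] at hadj

noncomputable def colEquiv {l : ℕ} (L : Fin 2 ⊕ Fin l → Finset ℕ) :
    {f : Fin 2 ⊕ Fin l → ℕ | IsProperListColoring (K2l l) L f} ≃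
      Σ c : ↥(L (Sum.inl 0)) × ↥(L (Sum.inl 1)),
        ∀ j : Fin l, ↥(L (Sum.inr j) \ {(c.1 : ℕ), (c.2 : ℕ)}) where
  toFun f := ⟨(⟨f.1 (Sum.inl 0), f.2.1 _⟩, ⟨f.1 (Sum.inl 1), f.2.1 _⟩), fun j => ⟨f.1 (Sum.inr j), by
    have h := (isProper_iff L f.1).mp f.2
    simp only [Finset.mem_sdiff, Finset.mem_insert, Finset.mem_singleton, not_or]
    exact ⟨h.1 _, (h.2 0 j).symm, (h.2 1 j).symm⟩⟩⟩
  invFun x := ⟨Sum.elim ![(x.1.1 : ℕ), (x.1.2 : ℕ)] (fun j => (x.2 j : ℕ)), by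
    rw [Set.mem_setOf_eq, isProper_iff]
    constructor
    · rintro (i | j)
      · fin_cases i
        · exact x.1.1.2
        · exact x.1.2.2
      · have := (x.2 j).2
        simp only [Finset.mem_sdiff] at this
        exact this.1
    · intro i j
      have := (x.2 j).2
      simp only [Finset.mem_sdiff, Finset.mem_insert, Finset.mem_singleton, not_or] at this
      fin_cases i
      · exact fun h => this.2.1 h.symm
      · exact fun h => this.2.2 h.symm⟩
  left_inv f := by
    apply Subtype.ext
    funext v
    rcases v with i | j
    · fin_cases i <;> rfl
    · rfl
  right_inv x := by rcases x with ⟨⟨c1, c2⟩, g⟩; rfl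

lemma count_formula {l : ℕ} (L : Fin 2 ⊕ Fin l → Finset ℕ) :
    numListColorings (K2l l) L =
      ∑ c1 ∈ L (Sum.inl 0), ∑ c2 ∈ L (Sum.inl 1),
        ∏ j : Fin l, (L (Sum.inr j) \ {c1, c2}).card := by
  rw [numListColorings, ← Nat.card_coe_set_eq, Nat.card_congr (colEquiv L),
    Nat.card_eq_fintype_card, Fintype.card_sigma]
  rw [Fintype.sum_prod_type]
  simp only [Fintype.card_pi, Fintype.card_coe]
  trans (∑ a : {x // x ∈ L (Sum.inl 0)}, ∑ c2 ∈ L (Sum.inl 1),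
      ∏ j : Fin l, (L (Sum.inr j) \ {(a : ℕ), c2}).card)
  · exact Fintype.sum_congr _ _ (fun a => Finset.sum_coe_sort (L (Sum.inl 1))
      (fun c2 => ∏ j : Fin l, (L (Sum.inr j) \ {(a : ℕ), c2}).card))
  · exact Finset.sum_coe_sort (L (Sum.inl 0))
      (fun c1 => ∑ c2 ∈ L (Sum.inl 1), ∏ j : Fin l, (L (Sum.inr j) \ {c1, c2}).card)

def fin4 (j : ℕ) : Fin 4 := ⟨j % 4, Nat.mod_lt _ (by norm_num)⟩

lemma prod_mod4 (t : ℕ) (g : Fin 4 → ℕ) :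
    ∏ j : Fin (4 * t), g (fin4 j.val) = (g 0 * g 1 * g 2 * g 3) ^ t := by
  rw [Fin.prod_univ_eq_prod_range (fun k => g (fin4 k)) (4 * t)]
  induction t with
  | zero => simp
  | succ n ih =>
    rw [show 4 * (n + 1) = (4 * n) + 1 + 1 + 1 + 1 by ring, Finset.prod_range_succ,
      Finset.prod_range_succ, Finset.prod_range_succ, Finset.prod_range_succ]
    rw [ih]
    have e0 : fin4 (4 * n) = 0 := by apply Fin.ext; simp [fin4]; try omega
    have e1 : fin4 (4 * n + 1) = 1 := by apply Fin.ext; simp [fin4]; try omega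
    have e2 : fin4 (4 * n + 2) = 2 := by apply Fin.ext; simp [fin4]; try omega
    have e3 : fin4 (4 * n + 3) = 3 := by apply Fin.ext; simp [fin4]; try omega
    rw [e0, e1, e2, e3, pow_succ]
    ring

lemma card_filter_mod4 (t r : ℕ) (hr : r < 4) :
    (Finset.filter (fun j : Fin (4 * t) => j.val % 4 = r) Finset.univ).card = t := by
  rw [Finset.card_filter]
  rw [Fin.sum_univ_eq_sum_range (fun k => if k % 4 = r then 1 else 0) (4 * t)]
  induction t with
  | zero => simp
  | succ n ih =>
    rw [show 4 * (n + 1) = (4 * n) + 1 + 1 + 1 + 1 by ring, Finset.sum_range_succ,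
      Finset.sum_range_succ, Finset.sum_range_succ, Finset.sum_range_succ]
    rw [ih]
    have e0 : (4 * n) % 4 = 0 := by omega
    have e1 : (4 * n + 1) % 4 = 1 := by omega
    have e2 : (4 * n + 2) % 4 = 2 := by omega
    have e3 : (4 * n + 3) % 4 = 3 := by omega
    rw [e0, e1, e2, e3]
    interval_cases r <;> simp

-- card of sdiff with a pair
lemma sdiff_pair_eq (s : Finset ℕ) (a b : ℕ) : s \ {a, b} = (s.erase a).erase b := by
  ext x; simp [Finset.mem_sdiff, Finset.mem_erase]; tauto

lemma card_sdiff_both {s : Finset ℕ} {a b : ℕ} (ha : a ∈ s) (hb : b ∈ s) (hab : a ≠ b) :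
    (s \ {a, b}).card = s.card - 2 := by
  rw [sdiff_pair_eq, Finset.card_erase_of_mem (Finset.mem_erase.mpr ⟨hab.symm, hb⟩),
    Finset.card_erase_of_mem ha]
  omega
lemma card_sdiff_left {s : Finset ℕ} {a b : ℕ} (ha : a ∈ s) (hb : b ∉ s) :
    (s \ {a, b}).card = s.card - 1 := by
  rw [sdiff_pair_eq, Finset.erase_eq_of_notMem (fun h => hb (Finset.mem_of_mem_erase h)),
    Finset.card_erase_of_mem ha]
lemma card_sdiff_right {s : Finset ℕ} {a b : ℕ} (ha : a ∉ s) (hb : b ∈ s) :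
    (s \ {a, b}).card = s.card - 1 := by
  rw [sdiff_pair_eq, Finset.erase_eq_of_notMem ha,
    Finset.card_erase_of_mem hb]
lemma card_sdiff_none {s : Finset ℕ} {a b : ℕ} (ha : a ∉ s) (hb : b ∉ s) :
    (s \ {a, b}).card = s.card := by
  rw [sdiff_pair_eq, Finset.erase_eq_of_notMem ha, Finset.erase_eq_of_notMem hb]
lemma card_sdiff_diag {s : Finset ℕ} {a : ℕ} (ha : a ∈ s) :
    (s \ {a, a}).card = s.card - 1 := by
  rw [sdiff_pair_eq, Finset.erase_idem, Finset.card_erase_of_mem ha]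

lemma sum_ite_diag (s : Finset ℕ) (A B : ℕ) :
    ∑ c1 ∈ s, ∑ c2 ∈ s, (if c1 = c2 then A else B) = s.card * A + s.card * (s.card - 1) * B := by
  have inner : ∀ c1 ∈ s, (∑ c2 ∈ s, if c1 = c2 then A else B) = A + (s.card - 1) * B := by
    intro c1 hc1
    rw [← Finset.add_sum_erase _ _ hc1, if_pos rfl]
    congr 1
    rw [Finset.sum_congr rfl (fun x hx => if_neg (fun h => (Finset.mem_erase.mp hx).1 h.symm)),
      Finset.sum_const, smul_eq_mul, Finset.card_erase_of_mem hc1]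
  rw [Finset.sum_congr rfl inner, Finset.sum_const, smul_eq_mul, Nat.mul_add, Nat.mul_assoc]

lemma mem_bal0 (m c : ℕ) : c ∈ balSet m 0 ↔ (1 ≤ c ∧ c ≤ m - 2) ∨ c = m - 1 ∨ c = m + 1 := by
  show c ∈ Finset.Icc 1 (m-2) ∪ {m-1, m+1} ↔ _
  simp [Finset.mem_union, Finset.mem_Icc, Finset.mem_insert]; tauto
lemma mem_bal1 (m c : ℕ) : c ∈ balSet m 1 ↔ (1 ≤ c ∧ c ≤ m - 2) ∨ c = m - 1 ∨ c = m + 2 := by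
  show c ∈ Finset.Icc 1 (m-2) ∪ {m-1, m+2} ↔ _
  simp [Finset.mem_union, Finset.mem_Icc, Finset.mem_insert]; tauto
lemma mem_bal2 (m c : ℕ) : c ∈ balSet m 2 ↔ (1 ≤ c ∧ c ≤ m - 2) ∨ c = m ∨ c = m + 1 := by
  show c ∈ Finset.Icc 1 (m-2) ∪ {m, m+1} ↔ _
  simp [Finset.mem_union, Finset.mem_Icc, Finset.mem_insert]; tauto
lemma mem_bal3 (m c : ℕ) : c ∈ balSet m 3 ↔ (1 ≤ c ∧ c ≤ m - 2) ∨ c = m ∨ c = m + 2 := by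
  show c ∈ Finset.Icc 1 (m-2) ∪ {m, m+2} ↔ _
  simp [Finset.mem_union, Finset.mem_Icc, Finset.mem_insert]; tauto

lemma card_Icc_pair {m : ℕ} (hm : 3 ≤ m) {x y : ℕ} (hx : m - 2 < x) (hy : m - 2 < y)
    (hxy : x ≠ y) : (Finset.Icc 1 (m - 2) ∪ {x, y}).card = m := by
  rw [Finset.card_union_of_disjoint, Nat.card_Icc, Finset.card_pair hxy]
  · omega
  · simp only [Finset.disjoint_left, Finset.mem_Icc, Finset.mem_insert, Finset.mem_singleton]
    rintro z ⟨h1, h2⟩ (rfl | rfl) <;> omega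

lemma balSet_card {m : ℕ} (hm : 3 ≤ m) (i : Fin 4) : (balSet m i).card = m := by
  fin_cases i <;> exact card_Icc_pair hm (by omega) (by omega) (by omega)

lemma balSet_invariants {m : ℕ} (hm : 3 ≤ m) (k : Fin 4) :
    ((m - 1) ∈ balSet m k ↔ k.val ≤ 1) ∧ ((m + 1) ∈ balSet m k ↔ (k.val = 0 ∨ k.val = 2)) := by
  fin_cases k
  · show ((m-1) ∈ balSet m 0 ↔ (0:ℕ) ≤ 1) ∧ ((m+1) ∈ balSet m 0 ↔ ((0:ℕ) = 0 ∨ (0:ℕ) = 2))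
    rw [mem_bal0, mem_bal0]
    constructor
    · constructor
      · intro _; norm_num
      · intro _; omega
    · constructor
      · intro _; norm_num
      · intro _; omega
  · show ((m-1) ∈ balSet m 1 ↔ (1:ℕ) ≤ 1) ∧ ((m+1) ∈ balSet m 1 ↔ ((1:ℕ) = 0 ∨ (1:ℕ) = 2))
    rw [mem_bal1, mem_bal1]
    constructor
    · constructor
      · intro _; norm_num
      · intro _; omega
    · constructor
      · intro h; exfalso; omega
      · intro h; exfalso; revert h; norm_num
  · show ((m-1) ∈ balSet m 2 ↔ (2:ℕ) ≤ 1) ∧ ((m+1) ∈ balSet m 2 ↔ ((2:ℕ) = 0 ∨ (2:ℕ) = 2))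
    rw [mem_bal2, mem_bal2]
    constructor
    · constructor
      · intro h; exfalso; omega
      · intro h; exfalso; revert h; norm_num
    · constructor
      · intro _; norm_num
      · intro _; omega
  · show ((m-1) ∈ balSet m 3 ↔ (3:ℕ) ≤ 1) ∧ ((m+1) ∈ balSet m 3 ↔ ((3:ℕ) = 0 ∨ (3:ℕ) = 2))
    rw [mem_bal3, mem_bal3]
    constructor
    · constructor
      · intro h; exfalso; omega
      · intro h; exfalso; revert h; norm_num
    · constructor
      · intro h; exfalso; omega
      · intro h; exfalso; revert h; norm_num

lemma balSet_inj {m : ℕ} (hm : 3 ≤ m) {i i' : Fin 4} (h : balSet m i = balSet m i') : i = i' := by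
  have h1 : (i.val ≤ 1) ↔ (i'.val ≤ 1) := by
    rw [← (balSet_invariants hm i).1, h, (balSet_invariants hm i').1]
  have h2 : (i.val = 0 ∨ i.val = 2) ↔ (i'.val = 0 ∨ i'.val = 2) := by
    rw [← (balSet_invariants hm i).2, h, (balSet_invariants hm i').2]
  have hi := i.isLt
  have hi' := i'.isLt
  exact Fin.ext (by omega)

/-- Product of the four list-minus-pair cardinalities. -/
def Eprod (m c1 c2 : ℕ) : ℕ :=
  (balSet m 0 \ {c1, c2}).card * (balSet m 1 \ {c1, c2}).card *
    (balSet m 2 \ {c1, c2}).card * (balSet m 3 \ {c1, c2}).card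

lemma block_diag {m : ℕ} (hm : 3 ≤ m) {c : ℕ} (h1 : 1 ≤ c) (h2 : c ≤ m - 2) :
    Eprod m c c = (m-1) * (m-1) * ((m-1) * (m-1)) := by
  rw [Eprod, card_sdiff_diag ((mem_bal0 m c).mpr (by omega)),
    card_sdiff_diag ((mem_bal1 m c).mpr (by omega)),
    card_sdiff_diag ((mem_bal2 m c).mpr (by omega)),
    card_sdiff_diag ((mem_bal3 m c).mpr (by omega)),
    balSet_card hm 0, balSet_card hm 1, balSet_card hm 2, balSet_card hm 3]
  try ring

lemma block_low {m : ℕ} (hm : 3 ≤ m) {c1 c2 : ℕ} (h1 : 1 ≤ c1) (h2 : c1 ≤ m - 2)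
    (h3 : 1 ≤ c2) (h4 : c2 ≤ m - 2) (hne : c1 ≠ c2) :
    Eprod m c1 c2 = (m-2) * (m-2) * ((m-2) * (m-2)) := by
  rw [Eprod, card_sdiff_both ((mem_bal0 m c1).mpr (by omega)) ((mem_bal0 m c2).mpr (by omega)) hne,
    card_sdiff_both ((mem_bal1 m c1).mpr (by omega)) ((mem_bal1 m c2).mpr (by omega)) hne,
    card_sdiff_both ((mem_bal2 m c1).mpr (by omega)) ((mem_bal2 m c2).mpr (by omega)) hne,
    card_sdiff_both ((mem_bal3 m c1).mpr (by omega)) ((mem_bal3 m c2).mpr (by omega)) hne,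
    balSet_card hm 0, balSet_card hm 1, balSet_card hm 2, balSet_card hm 3]
  try ring

lemma block_c2hi1 {m : ℕ} (hm : 3 ≤ m) {c1 : ℕ} (h1 : 1 ≤ c1) (h2 : c1 ≤ m - 2) :
    Eprod m c1 (m+1) = (m-2) * (m-2) * ((m-1) * (m-1)) := by
  rw [Eprod,
    card_sdiff_both ((mem_bal0 m c1).mpr (by omega)) ((mem_bal0 m (m+1)).mpr (by omega)) (by omega),
    card_sdiff_left ((mem_bal1 m c1).mpr (by omega)) (by rw [mem_bal1]; omega),
    card_sdiff_both ((mem_bal2 m c1).mpr (by omega)) ((mem_bal2 m (m+1)).mpr (by omega)) (by omega),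
    card_sdiff_left ((mem_bal3 m c1).mpr (by omega)) (by rw [mem_bal3]; omega),
    balSet_card hm 0, balSet_card hm 1, balSet_card hm 2, balSet_card hm 3]
  try ring

lemma block_c2hi2 {m : ℕ} (hm : 3 ≤ m) {c1 : ℕ} (h1 : 1 ≤ c1) (h2 : c1 ≤ m - 2) :
    Eprod m c1 (m+2) = (m-2) * (m-2) * ((m-1) * (m-1)) := by
  rw [Eprod,
    card_sdiff_left ((mem_bal0 m c1).mpr (by omega)) (by rw [mem_bal0]; omega),
    card_sdiff_both ((mem_bal1 m c1).mpr (by omega)) ((mem_bal1 m (m+2)).mpr (by omega)) (by omega),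
    card_sdiff_left ((mem_bal2 m c1).mpr (by omega)) (by rw [mem_bal2]; omega),
    card_sdiff_both ((mem_bal3 m c1).mpr (by omega)) ((mem_bal3 m (m+2)).mpr (by omega)) (by omega),
    balSet_card hm 0, balSet_card hm 1, balSet_card hm 2, balSet_card hm 3]
  try ring

lemma block_c1hi1 {m : ℕ} (hm : 3 ≤ m) {c2 : ℕ} (h3 : 1 ≤ c2) (h4 : c2 ≤ m - 2) :
    Eprod m (m-1) c2 = (m-2) * (m-2) * ((m-1) * (m-1)) := by
  rw [Eprod,
    card_sdiff_both ((mem_bal0 m (m-1)).mpr (by omega)) ((mem_bal0 m c2).mpr (by omega)) (by omega),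
    card_sdiff_both ((mem_bal1 m (m-1)).mpr (by omega)) ((mem_bal1 m c2).mpr (by omega)) (by omega),
    card_sdiff_right (by rw [mem_bal2]; omega) ((mem_bal2 m c2).mpr (by omega)),
    card_sdiff_right (by rw [mem_bal3]; omega) ((mem_bal3 m c2).mpr (by omega)),
    balSet_card hm 0, balSet_card hm 1, balSet_card hm 2, balSet_card hm 3]
  try ring

lemma block_c1hi2 {m : ℕ} (hm : 3 ≤ m) {c2 : ℕ} (h3 : 1 ≤ c2) (h4 : c2 ≤ m - 2) :
    Eprod m m c2 = (m-2) * (m-2) * ((m-1) * (m-1)) := by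
  rw [Eprod,
    card_sdiff_right (by rw [mem_bal0]; omega) ((mem_bal0 m c2).mpr (by omega)),
    card_sdiff_right (by rw [mem_bal1]; omega) ((mem_bal1 m c2).mpr (by omega)),
    card_sdiff_both ((mem_bal2 m m).mpr (by omega)) ((mem_bal2 m c2).mpr (by omega)) (by omega),
    card_sdiff_both ((mem_bal3 m m).mpr (by omega)) ((mem_bal3 m c2).mpr (by omega)) (by omega),
    balSet_card hm 0, balSet_card hm 1, balSet_card hm 2, balSet_card hm 3]
  try ring

lemma block_hh11 {m : ℕ} (hm : 3 ≤ m) :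
    Eprod m (m-1) (m+1) = (m-2) * (m-1) * ((m-1) * m) := by
  rw [Eprod,
    card_sdiff_both ((mem_bal0 m (m-1)).mpr (by omega)) ((mem_bal0 m (m+1)).mpr (by omega)) (by omega),
    card_sdiff_left ((mem_bal1 m (m-1)).mpr (by omega)) (by rw [mem_bal1]; omega),
    card_sdiff_right (by rw [mem_bal2]; omega) ((mem_bal2 m (m+1)).mpr (by omega)),
    card_sdiff_none (by rw [mem_bal3]; omega) (by rw [mem_bal3]; omega),
    balSet_card hm 0, balSet_card hm 1, balSet_card hm 2, balSet_card hm 3]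
  try ring

lemma block_hh12 {m : ℕ} (hm : 3 ≤ m) :
    Eprod m (m-1) (m+2) = (m-2) * (m-1) * ((m-1) * m) := by
  rw [Eprod,
    card_sdiff_left ((mem_bal0 m (m-1)).mpr (by omega)) (by rw [mem_bal0]; omega),
    card_sdiff_both ((mem_bal1 m (m-1)).mpr (by omega)) ((mem_bal1 m (m+2)).mpr (by omega)) (by omega),
    card_sdiff_none (by rw [mem_bal2]; omega) (by rw [mem_bal2]; omega),
    card_sdiff_right (by rw [mem_bal3]; omega) ((mem_bal3 m (m+2)).mpr (by omega)),
    balSet_card hm 0, balSet_card hm 1, balSet_card hm 2, balSet_card hm 3]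
  try ring

lemma block_hh21 {m : ℕ} (hm : 3 ≤ m) :
    Eprod m m (m+1) = (m-2) * (m-1) * ((m-1) * m) := by
  rw [Eprod,
    card_sdiff_right (by rw [mem_bal0]; omega) ((mem_bal0 m (m+1)).mpr (by omega)),
    card_sdiff_none (by rw [mem_bal1]; omega) (by rw [mem_bal1]; omega),
    card_sdiff_both ((mem_bal2 m m).mpr (by omega)) ((mem_bal2 m (m+1)).mpr (by omega)) (by omega),
    card_sdiff_left ((mem_bal3 m m).mpr (by omega)) (by rw [mem_bal3]; omega),
    balSet_card hm 0, balSet_card hm 1, balSet_card hm 2, balSet_card hm 3]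
  try ring

lemma block_hh22 {m : ℕ} (hm : 3 ≤ m) :
    Eprod m m (m+2) = (m-2) * (m-1) * ((m-1) * m) := by
  rw [Eprod,
    card_sdiff_none (by rw [mem_bal0]; omega) (by rw [mem_bal0]; omega),
    card_sdiff_right (by rw [mem_bal1]; omega) ((mem_bal1 m (m+2)).mpr (by omega)),
    card_sdiff_left ((mem_bal2 m m).mpr (by omega)) (by rw [mem_bal2]; omega),
    card_sdiff_both ((mem_bal3 m m).mpr (by omega)) ((mem_bal3 m (m+2)).mpr (by omega)) (by omega),
    balSet_card hm 0, balSet_card hm 1, balSet_card hm 2, balSet_card hm 3]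
  try ring


/-- The explicit balanced assignment. -/
def myL (m t : ℕ) : Fin 2 ⊕ Fin (4 * t) → Finset ℕ :=
  Sum.elim ![Finset.Icc 1 m, Finset.Icc 1 (m - 2) ∪ {m + 1, m + 2}]
    (fun j => balSet m (fin4 j.val))

lemma zCount_myL {m : ℕ} (hm : 3 ≤ m) (t : ℕ) (i : Fin 4) : zCount (myL m t) m i = t := by
  unfold zCount
  have hcong : ∀ j : Fin (4*t), (myL m t (Sum.inr j) = balSet m i ↔ (j.val % 4 = i.val)) := by
    intro j
    constructor
    · intro h
      have h2 : fin4 j.val = i := balSet_inj hm h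
      rw [← h2]
      rfl
    · intro h
      show balSet m (fin4 j.val) = balSet m i
      congr 1
      exact Fin.ext h
  rw [Finset.filter_congr (fun j _ => hcong j)]
  exact card_filter_mod4 t i.val i.isLt

lemma myL_balanced (m t : ℕ) (hm : 3 ≤ m) : IsBalanced m (myL m t) := by
  refine ⟨?_, rfl, rfl, ?_, ?_⟩
  · rintro (i | j)
    · fin_cases i
      · show (Finset.Icc 1 m).card = m
        rw [Nat.card_Icc]
        omega
      · show (Finset.Icc 1 (m-2) ∪ {m+1, m+2}).card = m
        exact card_Icc_pair hm (by omega) (by omega) (by omega)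
    · show (balSet m (fin4 j.val)).card = m
      exact balSet_card hm _
  · rw [Finset.sum_congr rfl (fun i _ => zCount_myL hm t i), Finset.sum_const,
      Finset.card_univ, Fintype.card_fin, smul_eq_mul]
  · intro i j
    rw [zCount_myL hm t i, zCount_myL hm t j]
    simp

lemma Icc_split {m : ℕ} (hm : 3 ≤ m) :
    Finset.Icc 1 m = Finset.Icc 1 (m-2) ∪ {m-1, m} := by
  ext x
  simp only [Finset.mem_Icc, Finset.mem_union, Finset.mem_insert, Finset.mem_singleton]
  omega

lemma disj1 {m : ℕ} (hm : 3 ≤ m) : Disjoint (Finset.Icc 1 (m-2)) ({m-1, m} : Finset ℕ) := by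
  simp only [Finset.disjoint_left, Finset.mem_Icc, Finset.mem_insert, Finset.mem_singleton]
  rintro x ⟨h1, h2⟩
  omega

lemma disj2 {m : ℕ} (hm : 3 ≤ m) : Disjoint (Finset.Icc 1 (m-2)) ({m+1, m+2} : Finset ℕ) := by
  simp only [Finset.disjoint_left, Finset.mem_Icc, Finset.mem_insert, Finset.mem_singleton]
  rintro x ⟨h1, h2⟩
  omega

lemma chromPoly_K2l (m t : ℕ) (hm : 3 ≤ m) :
    chromPoly (K2l (4*t)) m = m * (m-1)^(4*t) + m*(m-1)*(m-2)^(4*t) := by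
  rw [chromPoly, count_formula]
  show (∑ c1 ∈ Finset.Icc 1 m, ∑ c2 ∈ Finset.Icc 1 m,
      ∏ _j : Fin (4*t), ((Finset.Icc 1 m) \ {c1, c2}).card) = _
  trans (∑ c1 ∈ Finset.Icc 1 m, ∑ c2 ∈ Finset.Icc 1 m,
      if c1 = c2 then (m-1)^(4*t) else (m-2)^(4*t))
  · refine Finset.sum_congr rfl (fun c1 hc1 => Finset.sum_congr rfl (fun c2 hc2 => ?_))
    rw [Finset.prod_const, Finset.card_univ, Fintype.card_fin]
    simp only [Finset.mem_Icc] at hc1 hc2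
    by_cases h : c1 = c2
    · subst h
      rw [if_pos rfl, card_sdiff_diag (Finset.mem_Icc.mpr (by omega)), Nat.card_Icc,
        show m + 1 - 1 - 1 = m - 1 from by omega]
    · rw [if_neg h, card_sdiff_both (Finset.mem_Icc.mpr (by omega))
        (Finset.mem_Icc.mpr (by omega)) h, Nat.card_Icc,
        show m + 1 - 1 - 2 = m - 2 from by omega]
  · rw [sum_ite_diag, Nat.card_Icc, show m + 1 - 1 = m from by omega]

lemma numList_myL (m t : ℕ) (hm : 3 ≤ m) :
    numListColorings (K2l (4*t)) (myL m t) =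
      (m-2) * ((m-1)*(m-1)*((m-1)*(m-1)))^t + (m-2)*(m-3)*((m-2)*(m-2)*((m-2)*(m-2)))^t
        + 4*(m-2)*((m-2)*(m-2)*((m-1)*(m-1)))^t + 4*((m-2)*(m-1)*((m-1)*m))^t := by
  rw [count_formula]
  have h0 : myL m t (Sum.inl 0) = Finset.Icc 1 m := rfl
  have h1 : myL m t (Sum.inl 1) = Finset.Icc 1 (m-2) ∪ {m+1, m+2} := rfl
  rw [h0, h1]
  have hprod : ∀ c1 c2 : ℕ,
      (∏ j : Fin (4*t), ((myL m t (Sum.inr j)) \ {c1, c2}).card) = (Eprod m c1 c2)^t := by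
    intro c1 c2
    have h := prod_mod4 t (fun i => ((balSet m i) \ {c1, c2}).card)
    exact h
  trans (∑ c1 ∈ Finset.Icc 1 m, ∑ c2 ∈ Finset.Icc 1 (m-2) ∪ {m+1,m+2}, (Eprod m c1 c2)^t)
  · exact Finset.sum_congr rfl (fun c1 _ => Finset.sum_congr rfl (fun c2 _ => hprod c1 c2))
  rw [Icc_split hm, Finset.sum_union (disj1 hm)]
  have inner_split : ∀ c1 : ℕ, ∑ c2 ∈ Finset.Icc 1 (m-2) ∪ {m+1,m+2}, (Eprod m c1 c2)^t
      = (∑ c2 ∈ Finset.Icc 1 (m-2), (Eprod m c1 c2)^t)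
        + (∑ c2 ∈ ({m+1,m+2} : Finset ℕ), (Eprod m c1 c2)^t) :=
    fun c1 => Finset.sum_union (disj2 hm)
  simp only [inner_split]
  rw [Finset.sum_add_distrib, Finset.sum_add_distrib]
  have hT1 : ∑ c1 ∈ Finset.Icc 1 (m-2), ∑ c2 ∈ Finset.Icc 1 (m-2), (Eprod m c1 c2)^t
      = (m-2) * ((m-1)*(m-1)*((m-1)*(m-1)))^t
        + (m-2)*(m-3)*((m-2)*(m-2)*((m-2)*(m-2)))^t := by
    trans (∑ c1 ∈ Finset.Icc 1 (m-2), ∑ c2 ∈ Finset.Icc 1 (m-2),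
        if c1 = c2 then ((m-1)*(m-1)*((m-1)*(m-1)))^t else ((m-2)*(m-2)*((m-2)*(m-2)))^t)
    · refine Finset.sum_congr rfl (fun c1 hc1 => Finset.sum_congr rfl (fun c2 hc2 => ?_))
      simp only [Finset.mem_Icc] at hc1 hc2
      by_cases h : c1 = c2
      · subst h
        rw [if_pos rfl, block_diag hm hc1.1 hc1.2]
      · rw [if_neg h, block_low hm hc1.1 hc1.2 hc2.1 hc2.2 h]
    · rw [sum_ite_diag, Nat.card_Icc, show m - 2 + 1 - 1 = m - 2 from by omega,
        show m - 2 - 1 = m - 3 from by omega]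
  have hT2 : ∑ c1 ∈ Finset.Icc 1 (m-2), ∑ c2 ∈ ({m+1,m+2} : Finset ℕ), (Eprod m c1 c2)^t
      = 2*(m-2) * ((m-2)*(m-2)*((m-1)*(m-1)))^t := by
    trans (∑ _c1 ∈ Finset.Icc 1 (m-2), 2 * ((m-2)*(m-2)*((m-1)*(m-1)))^t)
    · refine Finset.sum_congr rfl (fun c1 hc1 => ?_)
      simp only [Finset.mem_Icc] at hc1
      rw [Finset.sum_pair (by omega : m+1 ≠ m+2), block_c2hi1 hm hc1.1 hc1.2,
        block_c2hi2 hm hc1.1 hc1.2]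
      have : (m-2) * (m-2) * ((m-1) * (m-1)) = (m-2)*(m-2)*(m-1)*(m-1) := by ring
      rw [this]
      ring
    · rw [Finset.sum_const, Nat.card_Icc, smul_eq_mul,
        show m - 2 + 1 - 1 = m - 2 from by omega]
      ring
  have hT3 : ∑ c1 ∈ ({m-1, m} : Finset ℕ), ∑ c2 ∈ Finset.Icc 1 (m-2), (Eprod m c1 c2)^t
      = 2*(m-2) * ((m-2)*(m-2)*((m-1)*(m-1)))^t := by
    rw [Finset.sum_pair (by omega : m-1 ≠ m)]
    have e1 : ∑ c2 ∈ Finset.Icc 1 (m-2), (Eprod m (m-1) c2)^t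
        = (m-2) * ((m-2)*(m-2)*((m-1)*(m-1)))^t := by
      trans (∑ _c2 ∈ Finset.Icc 1 (m-2), ((m-2)*(m-2)*((m-1)*(m-1)))^t)
      · refine Finset.sum_congr rfl (fun c2 hc2 => ?_)
        simp only [Finset.mem_Icc] at hc2
        rw [block_c1hi1 hm hc2.1 hc2.2]
      · rw [Finset.sum_const, Nat.card_Icc, smul_eq_mul,
          show m - 2 + 1 - 1 = m - 2 from by omega]
    have e2 : ∑ c2 ∈ Finset.Icc 1 (m-2), (Eprod m m c2)^t
        = (m-2) * ((m-2)*(m-2)*((m-1)*(m-1)))^t := by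
      trans (∑ _c2 ∈ Finset.Icc 1 (m-2), ((m-2)*(m-2)*((m-1)*(m-1)))^t)
      · refine Finset.sum_congr rfl (fun c2 hc2 => ?_)
        simp only [Finset.mem_Icc] at hc2
        rw [block_c1hi2 hm hc2.1 hc2.2]
      · rw [Finset.sum_const, Nat.card_Icc, smul_eq_mul,
          show m - 2 + 1 - 1 = m - 2 from by omega]
    rw [e1, e2]
    ring
  have hT4 : ∑ c1 ∈ ({m-1, m} : Finset ℕ), ∑ c2 ∈ ({m+1,m+2} : Finset ℕ), (Eprod m c1 c2)^t
      = 4 * ((m-2)*(m-1)*((m-1)*m))^t := by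
    rw [Finset.sum_pair (by omega : m-1 ≠ m), Finset.sum_pair (by omega : m+1 ≠ m+2),
      Finset.sum_pair (by omega : m+1 ≠ m+2), block_hh11 hm, block_hh12 hm,
      block_hh21 hm, block_hh22 hm]
    have : (m-2) * (m-1) * ((m-1) * m) = (m-2)*(m-1)*(m-1)*m := by ring
    rw [this]
    ring
  rw [hT1, hT2, hT3, hT4]
  ring

set_option maxHeartbeats 1000000 in

lemma key_ineq (m t : ℕ) (hm : 3 ≤ m) (ht : 1 ≤ t)
    (ε : ℝ) (hε : ε ∈ Set.Ioo (0 : ℝ) 2)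
    (htgt : (t : ℝ) >
      max (Real.log (ε / (4 * ((m : ℝ) - 2))) / (2 * Real.log (((m : ℝ) - 2) / ((m : ℝ) - 1))))
        (Real.log ((2 - ε) / 4) / Real.log (1 - 1 / ((m : ℝ) - 1) ^ 2))) :
    (m-2) * ((m-1)*(m-1)*((m-1)*(m-1)))^t + (m-2)*(m-3)*((m-2)*(m-2)*((m-2)*(m-2)))^t
      + 4*(m-2)*((m-2)*(m-2)*((m-1)*(m-1)))^t + 4*((m-2)*(m-1)*((m-1)*m))^t
    < m * (m-1)^(4*t) + m*(m-1)*(m-2)^(4*t) := by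
  obtain ⟨k, rfl⟩ : ∃ k, m = k + 3 := ⟨m - 3, by omega⟩
  obtain ⟨hε0, hε2⟩ := hε
  have hK0 : (0:ℝ) ≤ (k:ℝ) := Nat.cast_nonneg k
  have hcast : ((k + 3 : ℕ) : ℝ) = (k:ℝ) + 3 := by push_cast; ring
  rw [hcast, show ((k:ℝ) + 3 - 2) = (k:ℝ) + 1 from by ring,
    show ((k:ℝ) + 3 - 1) = (k:ℝ) + 2 from by ring] at htgt
  have ha : (0:ℝ) < (k:ℝ) + 1 := by linarith
  have hb : (0:ℝ) < (k:ℝ) + 2 := by linarith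
  have hM : (0:ℝ) < (k:ℝ) + 3 := by linarith
  -- first bound
  have hr : (0:ℝ) < ((k:ℝ)+1)/((k:ℝ)+2) := by positivity
  have hr1 : ((k:ℝ)+1)/((k:ℝ)+2) < 1 := by rw [div_lt_one hb]; linarith
  have hlogr : Real.log (((k:ℝ)+1)/((k:ℝ)+2)) < 0 := Real.log_neg hr hr1
  have htgt1 := lt_of_le_of_lt (le_max_left _ _) htgt
  have h1 : (t:ℝ) * (2 * Real.log (((k:ℝ)+1)/((k:ℝ)+2))) < Real.log (ε / (4 * ((k:ℝ)+1))) :=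
    (div_lt_iff_of_neg (by linarith : 2 * Real.log (((k:ℝ)+1)/((k:ℝ)+2)) < 0)).mp htgt1
  have hlog1 : Real.log ((((k:ℝ)+1)/((k:ℝ)+2)) ^ (2*t)) < Real.log (ε / (4 * ((k:ℝ)+1))) := by
    rw [Real.log_pow]; push_cast; linarith [h1]
  have hpow1 : ((((k:ℝ)+1))/((k:ℝ)+2)) ^ (2*t) < ε / (4 * ((k:ℝ)+1)) := by
    rwa [Real.log_lt_log_iff (by positivity) (by positivity)] at hlog1
  have key1 : 4*((k:ℝ)+1) * (((k:ℝ)+1)^t * ((k:ℝ)+1)^t)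
      < ε * ((((k:ℝ)+2)^t) * (((k:ℝ)+2)^t)) := by
    rw [div_pow] at hpow1
    have h := (div_lt_div_iff₀ (by positivity) (by positivity)).mp hpow1
    -- h : (k+1)^(2t) * (4*(k+1)) < ε * (k+2)^(2t)
    rw [show 2*t = t + t from by ring, pow_add, pow_add] at h
    linarith [h]
  -- second bound
  have hs_eq : 1 - 1 / ((k:ℝ)+2)^2 = (((k:ℝ)+1)*((k:ℝ)+3)) / ((k:ℝ)+2)^2 := by
    field_simp; ring
  have hs0 : (0:ℝ) < 1 - 1/((k:ℝ)+2)^2 := by rw [hs_eq]; positivity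
  have hs1 : 1 - 1/((k:ℝ)+2)^2 < 1 := by
    have : (0:ℝ) < 1/((k:ℝ)+2)^2 := by positivity
    linarith
  have hlogs : Real.log (1 - 1/((k:ℝ)+2)^2) < 0 := Real.log_neg hs0 hs1
  have htgt2 := lt_of_le_of_lt (le_max_right _ _) htgt
  have h2 : (t:ℝ) * Real.log (1 - 1/((k:ℝ)+2)^2) < Real.log ((2-ε)/4) :=
    (div_lt_iff_of_neg hlogs).mp htgt2
  have hlog2 : Real.log ((1 - 1/((k:ℝ)+2)^2) ^ t) < Real.log ((2-ε)/4) := by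
    rw [Real.log_pow]; linarith [h2]
  have hpow2 : (1 - 1/((k:ℝ)+2)^2) ^ t < (2-ε)/4 := by
    rwa [Real.log_lt_log_iff (by positivity) (div_pos (by linarith) (by norm_num))] at hlog2
  have key2 : 4 * ((((k:ℝ)+1)^t) * (((k:ℝ)+3)^t))
      < (2-ε) * ((((k:ℝ)+2)^t) * (((k:ℝ)+2)^t)) := by
    rw [hs_eq, div_pow, mul_pow] at hpow2
    have h := (div_lt_div_iff₀ (by positivity) (by norm_num : (0:ℝ) < 4)).mp hpow2
    -- h : (k+1)^t * (k+3)^t * 4 < (2-ε) * ((k+2)^2)^t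
    have e : (((k:ℝ)+2)^2)^t = ((k:ℝ)+2)^t * ((k:ℝ)+2)^t := by
      rw [← pow_mul, show 2*t = t + t from by ring, pow_add]
    rw [e] at h
    linarith [h]
  -- cast the goal
  rw [show k + 3 - 2 = k + 1 from by omega, show k + 3 - 1 = k + 2 from by omega,
    show k + 3 - 3 = k from by omega, ← Nat.cast_lt (α := ℝ)]
  push_cast
  simp only [mul_pow]
  rw [show 4 * t = t + t + (t + t) from by ring]
  simp only [pow_add]
  -- linear combination
  have hc1 := mul_lt_mul_of_pos_right key1
    (by positivity : (0:ℝ) < (((k:ℝ)+2)^t) * (((k:ℝ)+2)^t))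
  have hc2 := mul_lt_mul_of_pos_right key2
    (by positivity : (0:ℝ) < (((k:ℝ)+2)^t) * (((k:ℝ)+2)^t))
  have hc3 : (((k:ℝ)+1)*(k:ℝ)) * ((((k:ℝ)+1)^t)*(((k:ℝ)+1)^t)*((((k:ℝ)+1)^t)*(((k:ℝ)+1)^t)))
      ≤ (((k:ℝ)+3)*((k:ℝ)+2)) * ((((k:ℝ)+1)^t)*(((k:ℝ)+1)^t)*((((k:ℝ)+1)^t)*(((k:ℝ)+1)^t))) := by
    have h1 : ((k:ℝ)+1)*(k:ℝ) ≤ ((k:ℝ)+3)*((k:ℝ)+2) := by nlinarith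
    exact mul_le_mul_of_nonneg_right h1 (by positivity)
  linarith [hc1, hc2, hc3]

/-- Lemma 5 of the paper: for `G = K_{2,4t}` and `m ≥ 3`, if
`t > max{ln(ε/(4(m-2)))/(2 ln((m-2)/(m-1))), ln((2-ε)/4)/ln(1-1/(m-1)²)}` for some
`ε ∈ (0,2)`, then there is a balanced `m`-assignment `L` for `G` with
`P(G,L) < P(G,m)`. -/
theorem exists_balanced_K2_4t (m t : ℕ) (hm : 3 ≤ m) (ht : 1 ≤ t)
    (ε : ℝ) (hε : ε ∈ Set.Ioo (0 : ℝ) 2)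
    (htgt : (t : ℝ) >
      max (Real.log (ε / (4 * ((m : ℝ) - 2))) / (2 * Real.log (((m : ℝ) - 2) / ((m : ℝ) - 1))))
        (Real.log ((2 - ε) / 4) / Real.log (1 - 1 / ((m : ℝ) - 1) ^ 2))) :
    ∃ L : Fin 2 ⊕ Fin (4 * t) → Finset ℕ, IsBalanced m L ∧
      numListColorings (K2l (4 * t)) L < chromPoly (K2l (4 * t)) m := by
  refine ⟨myL m t, myL_balanced m t hm, ?_⟩
  rw [numList_myL m t hm, chromPoly_K2l m t hm]
  exact key_ineq m t hm ht ε hε htgt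
end

section
/- Let m ≥ 3 be an integer and let z_1, z_2, z_3, z_4 be nonnegative integers with z_1 + z_2 + z_3 + z_4 = l, |z_i − z_j| ≤ 1 for all i,j ∈ [4], and z_1 ≤ z_j for each j ∈ {2,3,4}. Suppose there exists ε ∈ (0,2) such that 2(m−2)·((m−2)/(m−1))^{2z_1} < ε and 4·(m(m−2)/(m−1)²)^{z_1} < 2 − ε. Then 2·m^{z_1}(m−1)^{z_2+z_3}(m−2)^{z_4} + m^{z_3}(m−1)^{z_1+z_4}(m−2)^{z_2} + m^{z_2}(m−1)^{z_1+z_4}(m−2)^{z_3} + (m−2)·(m−1)^{z_1+z_3}(m−2)^{z_2+z_4} + (m−2)·(m−1)^{z_1+z_2}(m−2)^{z_3+z_4} < 2(m−1)^l. -/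
private lemma keyQ (M : ℝ) (hm : 3 ≤ M) (d2 d3 d4 : ℕ) (h2 : d2 ≤ 1) (h3 : d3 ≤ 1)
    (h4 : d4 ≤ 1) :
    2 * ((M-1)^d2 * (M-1)^d3) * (M-2)^d4
      + (M^d3 * (M-2)^d2 + M^d2 * (M-2)^d3) * (M-1)^d4
      ≤ 4 * ((M-1)^d2 * ((M-1)^d3 * (M-1)^d4)) := by
  interval_cases d2 <;> interval_cases d3 <;> interval_cases d4 <;>
    simp only [pow_zero, pow_one, one_mul, mul_one] <;> nlinarith [hm]

private lemma keyR (M : ℝ) (hm : 3 ≤ M) (d2 d3 d4 : ℕ) (h2 : d2 ≤ 1) (h3 : d3 ≤ 1)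
    (h4 : d4 ≤ 1) :
    (M-1)^d3 * ((M-2)^d2 * (M-2)^d4) + (M-1)^d2 * ((M-2)^d3 * (M-2)^d4)
      ≤ 2 * ((M-1)^d2 * ((M-1)^d3 * (M-1)^d4)) := by
  interval_cases d2 <;> interval_cases d3 <;> interval_cases d4 <;>
    simp only [pow_zero, pow_one, one_mul, mul_one] <;> nlinarith [hm]

/-- The key arithmetic inequality in the proof of Lemma 3: for an integer `m ≥ 3` and
nonnegative integers `z_1, z_2, z_3, z_4` with `z_1 + z_2 + z_3 + z_4 = l`,
`|z_i - z_j| ≤ 1` for all `i, j ∈ [4]`, and `z_1 ≤ z_j` for `j ∈ {2,3,4}`, if there is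
`ε ∈ (0,2)` with `2(m-2)((m-2)/(m-1))^{2z_1} < ε` and `4(m(m-2)/(m-1)²)^{z_1} < 2 - ε`,
then
`2 m^{z_1}(m-1)^{z_2+z_3}(m-2)^{z_4} + m^{z_3}(m-1)^{z_1+z_4}(m-2)^{z_2}
  + m^{z_2}(m-1)^{z_1+z_4}(m-2)^{z_3} + (m-2)(m-1)^{z_1+z_3}(m-2)^{z_2+z_4}
  + (m-2)(m-1)^{z_1+z_2}(m-2)^{z_3+z_4} < 2(m-1)^l`. -/
theorem key_balanced_inequality (m l z1 z2 z3 z4 : ℕ) (hm : 3 ≤ m)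
    (hsum : z1 + z2 + z3 + z4 = l)
    (h12 : |(z1 : ℤ) - (z2 : ℤ)| ≤ 1) (h13 : |(z1 : ℤ) - (z3 : ℤ)| ≤ 1)
    (h14 : |(z1 : ℤ) - (z4 : ℤ)| ≤ 1) (h23 : |(z2 : ℤ) - (z3 : ℤ)| ≤ 1)
    (h24 : |(z2 : ℤ) - (z4 : ℤ)| ≤ 1) (h34 : |(z3 : ℤ) - (z4 : ℤ)| ≤ 1)
    (hz2 : z1 ≤ z2) (hz3 : z1 ≤ z3) (hz4 : z1 ≤ z4)
    (ε : ℝ) (hε : ε ∈ Set.Ioo (0 : ℝ) 2)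
    (h1 : 2 * ((m : ℝ) - 2) * (((m : ℝ) - 2) / ((m : ℝ) - 1)) ^ (2 * z1) < ε)
    (h2 : 4 * ((m : ℝ) * ((m : ℝ) - 2) / ((m : ℝ) - 1) ^ 2) ^ z1 < 2 - ε) :
    2 * (m : ℝ) ^ z1 * ((m : ℝ) - 1) ^ (z2 + z3) * ((m : ℝ) - 2) ^ z4 +
      (m : ℝ) ^ z3 * ((m : ℝ) - 1) ^ (z1 + z4) * ((m : ℝ) - 2) ^ z2 +
      (m : ℝ) ^ z2 * ((m : ℝ) - 1) ^ (z1 + z4) * ((m : ℝ) - 2) ^ z3 +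
      ((m : ℝ) - 2) * ((m : ℝ) - 1) ^ (z1 + z3) * ((m : ℝ) - 2) ^ (z2 + z4) +
      ((m : ℝ) - 2) * ((m : ℝ) - 1) ^ (z1 + z2) * ((m : ℝ) - 2) ^ (z3 + z4) <
      2 * ((m : ℝ) - 1) ^ l := by
  obtain ⟨hε0, hε2⟩ := hε
  have hm' : (3:ℝ) ≤ (m:ℝ) := by exact_mod_cast hm
  have hc : (0:ℝ) < (m:ℝ) - 2 := by linarith
  have hb : (0:ℝ) < (m:ℝ) - 1 := by linarith
  have h12' := abs_le.mp h12
  have h13' := abs_le.mp h13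
  have h14' := abs_le.mp h14
  have hB : (0:ℝ) < ((m:ℝ) - 1) ^ z1 := pow_pos hb z1
  have hC : (0:ℝ) < ((m:ℝ) - 2) ^ z1 := pow_pos hc z1
  have hX : (0:ℝ) < (m:ℝ) ^ z1 := pow_pos (by linarith) z1
  -- key fact A from h2
  have hA : 4 * ((m:ℝ) ^ z1 * ((m:ℝ) - 2) ^ z1) < (2 - ε) * (((m:ℝ) - 1) ^ z1)^2 := by
    have hB2 : (0:ℝ) < (((m:ℝ) - 1) ^ 2) ^ z1 := pow_pos (by positivity) z1
    rw [div_pow, ← mul_div_assoc, div_lt_iff₀ hB2] at h2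
    calc 4 * ((m:ℝ) ^ z1 * ((m:ℝ) - 2) ^ z1) = 4 * ((m:ℝ) * ((m:ℝ)-2)) ^ z1 := by
            rw [mul_pow]
      _ < (2 - ε) * (((m:ℝ) - 1) ^ 2) ^ z1 := by linarith [h2]
      _ = (2 - ε) * (((m:ℝ) - 1) ^ z1)^2 := by rw [← pow_mul, ← pow_mul, Nat.mul_comm]
  -- key fact B from h1
  have hBB : 2 * ((m:ℝ) - 2) * (((m:ℝ) - 2) ^ z1)^2 < ε * (((m:ℝ) - 1) ^ z1)^2 := by
    have hBp : (0:ℝ) < ((m:ℝ) - 1) ^ (2*z1) := pow_pos hb _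
    rw [div_pow, ← mul_div_assoc, div_lt_iff₀ hBp] at h1
    calc 2 * ((m:ℝ) - 2) * (((m:ℝ) - 2) ^ z1)^2
        = 2 * ((m:ℝ) - 2) * ((m:ℝ) - 2) ^ (2*z1) := by rw [← pow_mul, Nat.mul_comm]
      _ < ε * ((m:ℝ) - 1) ^ (2*z1) := by linarith [h1]
      _ = ε * (((m:ℝ) - 1) ^ z1)^2 := by rw [← pow_mul, Nat.mul_comm]
  have hKey : 4 * ((m:ℝ) ^ z1 * ((m:ℝ) - 2) ^ z1)
      + 2 * (((m:ℝ) - 2) * (((m:ℝ) - 2) ^ z1 * ((m:ℝ) - 2) ^ z1))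
      < 2 * (((m:ℝ) - 1) ^ z1 * ((m:ℝ) - 1) ^ z1) := by nlinarith [hA, hBB]
  obtain ⟨d2, hd2, rfl⟩ : ∃ d, d ≤ 1 ∧ z2 = z1 + d := ⟨z2 - z1, by omega, by omega⟩
  obtain ⟨d3, hd3, rfl⟩ : ∃ d, d ≤ 1 ∧ z3 = z1 + d := ⟨z3 - z1, by omega, by omega⟩
  obtain ⟨d4, hd4, rfl⟩ : ∃ d, d ≤ 1 ∧ z4 = z1 + d := ⟨z4 - z1, by omega, by omega⟩
  subst hsum
  -- scalar case bounds
  have hQ := keyQ (m:ℝ) hm' d2 d3 d4 hd2 hd3 hd4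
  have hR := keyR (m:ℝ) hm' d2 d3 d4 hd2 hd3 hd4
  have hS : (0:ℝ) < ((m:ℝ)-1)^d2 * (((m:ℝ)-1)^d3 * ((m:ℝ)-1)^d4) := by positivity
  set M : ℝ := (m:ℝ) with hM
  set X : ℝ := M ^ z1 with hXd
  set B : ℝ := (M-1) ^ z1 with hBd
  set C : ℝ := (M-2) ^ z1 with hCd
  set S : ℝ := (M-1)^d2 * ((M-1)^d3 * (M-1)^d4) with hSd
  calc 2 * M ^ z1 * (M - 1) ^ ((z1+d2) + (z1+d3)) * (M - 2) ^ (z1+d4) +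
      M ^ (z1+d3) * (M - 1) ^ (z1 + (z1+d4)) * (M - 2) ^ (z1+d2) +
      M ^ (z1+d2) * (M - 1) ^ (z1 + (z1+d4)) * (M - 2) ^ (z1+d3) +
      (M - 2) * (M - 1) ^ (z1 + (z1+d3)) * (M - 2) ^ ((z1+d2) + (z1+d4)) +
      (M - 2) * (M - 1) ^ (z1 + (z1+d2)) * (M - 2) ^ ((z1+d3) + (z1+d4))
      = (X*C) * (B*B) * (2 * ((M-1)^d2 * (M-1)^d3) * (M-2)^d4
          + (M^d3 * (M-2)^d2 + M^d2 * (M-2)^d3) * (M-1)^d4)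
        + ((M-2) * (C*C)) * (B*B) * ((M-1)^d3 * ((M-2)^d2 * (M-2)^d4)
          + (M-1)^d2 * ((M-2)^d3 * (M-2)^d4)) := by
        simp only [hXd, hBd, hCd, pow_add]; ring
    _ ≤ (X*C) * (B*B) * (4 * S) + ((M-2) * (C*C)) * (B*B) * (2 * S) := by
        have p1 : (0:ℝ) ≤ (X*C) * (B*B) := by positivity
        have p2 : (0:ℝ) ≤ ((M-2) * (C*C)) * (B*B) := by positivity
        exact add_le_add (mul_le_mul_of_nonneg_left hQ p1) (mul_le_mul_of_nonneg_left hR p2)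
    _ = (4 * (X*C) + 2 * ((M-2) * (C*C))) * ((B*B) * S) := by ring
    _ < (2 * (B*B)) * ((B*B) * S) := by
        exact mul_lt_mul_of_pos_right hKey (by positivity)
    _ = 2 * (M - 1) ^ (z1 + (z1+d2) + (z1+d3) + (z1+d4)) := by
        simp only [hBd, hSd, pow_add]; ring
end

section
/- Let m, t be integers with m ≥ 3 and t ≥ 1, and set s = 1 − 1/(m−1) and b = 1 + 1/(m−1). If 4(m−2)·s^{2t} + 4·(s·b)^t < 2, then (m−2)(m−1)^{4t} + (m−3)(m−2)^{4t+1} + 4(m−1)^{2t}(m−2)^{2t+1} + 4·m^t(m−2)^t(m−1)^{2t} < m(m−1)^{4t} + m(m−1)(m−2)^{4t}. -/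
/-- The algebraic core of Lemma 5: for integers `m ≥ 3` and `t ≥ 1`, with
`s = 1 - 1/(m-1)` and `b = 1 + 1/(m-1)`, if `4(m-2)s^{2t} + 4(sb)^t < 2`, then
`(m-2)(m-1)^{4t} + (m-3)(m-2)^{4t+1} + 4(m-1)^{2t}(m-2)^{2t+1} + 4m^t(m-2)^t(m-1)^{2t}
  < m(m-1)^{4t} + m(m-1)(m-2)^{4t}`. -/
theorem core_K2_4t_inequality (m t : ℕ) (hm : 3 ≤ m) (ht : 1 ≤ t) (s b : ℝ)
    (hs : s = 1 - 1 / ((m : ℝ) - 1)) (hb : b = 1 + 1 / ((m : ℝ) - 1))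
    (h : 4 * ((m : ℝ) - 2) * s ^ (2 * t) + 4 * (s * b) ^ t < 2) :
    ((m : ℝ) - 2) * ((m : ℝ) - 1) ^ (4 * t) + ((m : ℝ) - 3) * ((m : ℝ) - 2) ^ (4 * t + 1) +
        4 * ((m : ℝ) - 1) ^ (2 * t) * ((m : ℝ) - 2) ^ (2 * t + 1) +
        4 * (m : ℝ) ^ t * ((m : ℝ) - 2) ^ t * ((m : ℝ) - 1) ^ (2 * t) <
      (m : ℝ) * ((m : ℝ) - 1) ^ (4 * t) + (m : ℝ) * ((m : ℝ) - 1) * ((m : ℝ) - 2) ^ (4 * t) := by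
  set x : ℝ := (m : ℝ) with hx
  have hx3 : (3 : ℝ) ≤ x := by rw [hx]; exact_mod_cast hm
  have hA : (0 : ℝ) < x - 1 := by linarith
  have hB : (0 : ℝ) ≤ x - 2 := by linarith
  have hP : (0 : ℝ) < (x - 1) ^ (2 * t) := pow_pos hA _
  have hs' : s = (x - 2) / (x - 1) := by rw [hs]; field_simp; ring
  have hsb : s * b = x * (x - 2) / (x - 1) ^ 2 := by
    rw [hs, hb]; field_simp; ring
  rw [hsb, hs', div_pow, div_pow] at h
  have e2 : ((x - 1) ^ 2) ^ t = (x - 1) ^ (2 * t) := by rw [← pow_mul]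
  rw [e2] at h
  have key : 4 * (x - 2) * (x - 2) ^ (2 * t) + 4 * (x * (x - 2)) ^ t
      < 2 * (x - 1) ^ (2 * t) := by
    have h2 := mul_lt_mul_of_pos_right h hP
    have hP' : ((x - 1) ^ (2 * t)) ≠ 0 := ne_of_gt hP
    field_simp at h2
    linarith
  have key' := mul_lt_mul_of_pos_right key hP
  have e4 : (x - 1) ^ (4 * t) = ((x - 1) ^ (2 * t)) ^ 2 := by
    rw [← pow_mul]; congr 1; ring
  have e5 : (x - 2) ^ (4 * t) = ((x - 2) ^ (2 * t)) ^ 2 := by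
    rw [← pow_mul]; congr 1; ring
  have e6 : (x - 2) ^ (4 * t + 1) = ((x - 2) ^ (2 * t)) ^ 2 * (x - 2) := by
    rw [pow_succ, e5]
  have e7 : (x - 2) ^ (2 * t + 1) = (x - 2) ^ (2 * t) * (x - 2) := pow_succ _ _
  have e8 : (x * (x - 2)) ^ t = x ^ t * (x - 2) ^ t := mul_pow _ _ _
  rw [e8] at key'
  rw [e4, e5, e6, e7]
  have hQ : (0 : ℝ) ≤ (4 * x - 6) * ((x - 2) ^ (2 * t)) ^ 2 :=
    mul_nonneg (by linarith) (sq_nonneg _)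
  nlinarith [key', hQ]
end

section
/- For n, l ∈ ℕ, the list chromatic number of the complete bipartite graph K_{n,l} satisfies χ_ℓ(K_{n,l}) = n + 1 if and only if l ≥ n^n. -/
/-- The complete bipartite graph `K_{n,l}`. -/
def Knl (n l : ℕ) : SimpleGraph (Fin n ⊕ Fin l) := completeBipartiteGraph (Fin n) (Fin l)


/-!
Once the left side of `K_{V,W}` is coloured from its lists, a right vertex can still be coloured
unless its list lies inside the set of colours used on the left. So `|V| + 1` colours always
suffice, and a `|V|`-assignment is bad exactly when the image of every choice function of the
left lists contains a right list. With pairwise disjoint left lists the `|V| ^ |V|` choice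
functions have distinct images of size `|V|`, which `|W| ≥ |V| ^ |V|` right lists can list
exactly; with fewer right lists, counting (or a repeated colour when the left lists meet) leaves
some choice function uncovered.
-/

open Finset Function

def IsChoosable {V : Type*} (G : SimpleGraph V) (k : ℕ) : Prop :=
  ∀ L : V → Finset ℕ, IsAssignment L k → ∃ f, IsProperListColoring G L f

section Choosable

variable {V : Type*} {G : SimpleGraph V}

theorem IsChoosable.mono {k m : ℕ} (h : IsChoosable G k) (hkm : k ≤ m) : IsChoosable G m := by
  intro L hL
  choose L' hL'sub hL'card using fun v => exists_subset_card_eq (s := L v) (hL v ▸ hkm)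
  obtain ⟨f, hfL', hf⟩ := h L' hL'card
  exact ⟨f, fun v => hL'sub v (hfL' v), hf⟩

theorem listChromNum_eq_succ_iff (k : ℕ) :
    listChromNum G = k + 1 ↔ IsChoosable G (k + 1) ∧ ¬IsChoosable G k := by
  change sInf {k | IsChoosable G k} = k + 1 ↔ _
  constructor
  · intro h
    exact ⟨h ▸ Nat.sInf_mem (Nat.nonempty_of_sInf_eq_succ h),
      Nat.notMem_of_lt_sInf (by rw [h]; exact k.lt_succ_self)⟩
  · rintro ⟨hsucc, hk⟩
    refine le_antisymm (Nat.sInf_le hsucc) (le_csInf ⟨_, hsucc⟩ fun j hj => ?_)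
    by_contra! hjk
    exact hk (hj.mono (by omega))

end Choosable

section PiFinset

variable {ι α : Type*} [Fintype ι] [DecidableEq ι] {A : ι → Finset α}

theorem Fintype.injective_of_mem_piFinset (hA : Pairwise (Disjoint on A)) {g : ι → α}
    (hg : g ∈ piFinset A) : Injective g := by
  intro i j hij
  by_contra hne
  rw [Fintype.mem_piFinset] at hg
  exact disjoint_left.mp (hA hne) (hg i) (hij ▸ hg j)

theorem Fintype.injOn_image_piFinset [DecidableEq α] (hA : Pairwise (Disjoint on A)) :
    Set.InjOn (fun g : ι → α => univ.image g) (piFinset A) := by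
  intro g hg g' hg' himg
  rw [Finset.mem_coe, Fintype.mem_piFinset] at hg hg'
  replace himg : univ.image g = univ.image g' := himg
  funext i
  obtain ⟨j, -, hj⟩ := mem_image.mp (himg ▸ mem_image_of_mem g (mem_univ i))
  obtain rfl : j = i := by
    by_contra hne
    exact disjoint_left.mp (hA hne) (hg' j) (hj ▸ hg i)
  exact hj.symm

theorem Fintype.exists_mem_piFinset_card_image_lt [DecidableEq α] (hA : ∀ i, (A i).Nonempty)
    {i j : ι} (hij : i ≠ j) {c : α} (hci : c ∈ A i) (hcj : c ∈ A j) :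
    ∃ g ∈ piFinset A, #(univ.image g) < Fintype.card ι := by
  choose g₀ hg₀ using hA
  refine ⟨update (update g₀ i c) j c, Fintype.mem_piFinset.mpr fun v => ?_,
    lt_of_le_of_ne card_image_le fun h => hij ?_⟩
  · rcases eq_or_ne v j with rfl | hvj
    · simpa using hcj
    rcases eq_or_ne v i with rfl | hvi
    · simpa [hvj] using hci
    · simpa [hvj, hvi] using hg₀ v
  · refine card_image_iff.mp h (mem_coe.mpr (mem_univ i)) (mem_coe.mpr (mem_univ j)) ?_
    simp [hij]

theorem Fintype.exists_mem_piFinset_forall_not_subset_image [DecidableEq α] {κ : Type*}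
    [Fintype κ] {B : κ → Finset α} (hA : ∀ i, #(A i) = Fintype.card ι)
    (hB : ∀ k, #(B k) = Fintype.card ι)
    (hκ : Fintype.card κ < Fintype.card ι ^ Fintype.card ι) :
    ∃ g ∈ piFinset A, ∀ k, ¬B k ⊆ univ.image g := by
  by_cases hdisj : Pairwise (Disjoint on A)
  · have hcard :
        #((piFinset A).image fun g => univ.image g) = Fintype.card ι ^ Fintype.card ι := by
      rw [card_image_of_injOn (injOn_image_piFinset hdisj), card_piFinset,
        Finset.prod_congr rfl fun i _ => hA i, prod_const, card_univ]
    obtain ⟨s, hs, hsB⟩ := exists_mem_notMem_of_card_lt_card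
      (s := univ.image B) (t := (piFinset A).image fun g => univ.image g)
      (by rw [hcard]; exact card_image_le.trans_lt (by simpa using hκ))
    obtain ⟨g, hg, rfl⟩ := mem_image.mp hs
    refine ⟨g, hg, fun k hk => hsB ?_⟩
    rw [← eq_of_subset_of_card_le hk (by rw [hB]; exact card_image_le.trans_eq card_univ)]
    exact mem_image_of_mem B (mem_univ k)
  · obtain ⟨i, j, hij, hnd⟩ : ∃ i j, i ≠ j ∧ ¬Disjoint (A i) (A j) := by
      simpa [Pairwise] using hdisj
    obtain ⟨c, hci, hcj⟩ := not_disjoint_iff.mp hnd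
    have hne : ∀ v, (A v).Nonempty := fun v =>
      Finset.card_pos.mp (by rw [hA]; exact Fintype.card_pos_iff.mpr ⟨i⟩)
    obtain ⟨g, hg, hlt⟩ := exists_mem_piFinset_card_image_lt hne hij hci hcj
    exact ⟨g, hg, fun k hk => (card_le_card hk).not_gt (by rwa [hB])⟩

end PiFinset

section CompleteBipartite

variable {V W : Type*} [Fintype V]

theorem exists_isProperListColoring_completeBipartiteGraph_iff {L : V ⊕ W → Finset ℕ} :
    (∃ f, IsProperListColoring (completeBipartiteGraph V W) L f) ↔
      ∃ g : V → ℕ, (∀ v, g v ∈ L (.inl v)) ∧ ∀ w, ¬L (.inr w) ⊆ univ.image g := by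
  constructor
  · rintro ⟨f, hfL, hf⟩
    refine ⟨f ∘ Sum.inl, fun v => hfL _, fun w hw => ?_⟩
    obtain ⟨v, -, hv⟩ := mem_image.mp (hw (hfL (.inr w)))
    exact hf (u := .inl v) (w := .inr w) (by simp) hv
  · rintro ⟨g, hg, hgL⟩
    choose c hcL hcg using fun w => not_subset.mp (hgL w)
    refine ⟨Sum.elim g c, ?_, ?_⟩
    · rintro (v | w)
      exacts [hg v, hcL w]
    · rintro (v | w) (v' | w') hadj heq <;> simp at hadj
      · exact hcg w' (mem_image.mpr ⟨v, mem_univ v, heq⟩)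
      · exact hcg w (mem_image.mpr ⟨v', mem_univ v', heq.symm⟩)

theorem isChoosable_completeBipartiteGraph_card_add_one :
    IsChoosable (completeBipartiteGraph V W) (Fintype.card V + 1) := by
  intro L hL
  choose g hg using fun v => Finset.card_pos.mp (by rw [hL (.inl v)]; omega)
  refine exists_isProperListColoring_completeBipartiteGraph_iff.mpr ⟨g, hg, fun w hw => ?_⟩
  have := (card_le_card hw).trans (card_image_le.trans_eq card_univ)
  rw [hL] at this
  omega

theorem isChoosable_completeBipartiteGraph_card_of_lt [Fintype W] [DecidableEq V]
    (h : Fintype.card W < Fintype.card V ^ Fintype.card V) :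
    IsChoosable (completeBipartiteGraph V W) (Fintype.card V) := by
  intro L hL
  obtain ⟨g, hg, hgL⟩ := Fintype.exists_mem_piFinset_forall_not_subset_image
    (A := L ∘ Sum.inl) (B := L ∘ Sum.inr) (fun _ => hL _) (fun _ => hL _) h
  exact exists_isProperListColoring_completeBipartiteGraph_iff.mpr
    ⟨g, Fintype.mem_piFinset.mp hg, hgL⟩

theorem not_isChoosable_completeBipartiteGraph_card_of_le [Fintype W]
    (h : Fintype.card V ^ Fintype.card V ≤ Fintype.card W) :
    ¬IsChoosable (completeBipartiteGraph V W) (Fintype.card V) := by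
  classical
  obtain ⟨ι, hι⟩ := Countable.exists_injective_nat (V × V)
  set A : V → Finset ℕ := fun v => univ.image fun u => ι (v, u)
  have hAcard : ∀ v, #(A v) = Fintype.card V := fun v => by
    rw [card_image_of_injective _ fun u u' huu' => (Prod.ext_iff.mp (hι huu')).2, card_univ]
  have hAdisj : Pairwise (Disjoint on A) := fun v v' hvv' => disjoint_left.mpr fun c hc hc' => by
    obtain ⟨u, -, rfl⟩ := mem_image.mp hc
    obtain ⟨u', -, hu'⟩ := mem_image.mp hc'
    exact hvv' (Prod.ext_iff.mp (hι hu')).1.symm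
  have hcard : Fintype.card (Fintype.piFinset A) ≤ Fintype.card W := by
    rwa [Fintype.card_coe, Fintype.card_piFinset, Finset.prod_congr rfl fun v _ => hAcard v,
      prod_const, card_univ]
  obtain ⟨e⟩ := Embedding.nonempty_of_card_le hcard
  have : Nonempty (Fintype.piFinset A) := (Fintype.piFinset_nonempty.mpr fun v =>
    Finset.card_pos.mp (by rw [hAcard]; exact Fintype.card_pos_iff.mpr ⟨v⟩)).to_subtype
  set φ : W → Fintype.piFinset A := invFun e
  intro hchoosable
  obtain ⟨g, hg, hgL⟩ := exists_isProperListColoring_completeBipartiteGraph_iff.mp <|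
    hchoosable (Sum.elim A fun w => univ.image (φ w : V → ℕ)) <| by
      rintro (v | w)
      · exact hAcard v
      · rw [Sum.elim_inr, card_image_of_injective _
          (Fintype.injective_of_mem_piFinset hAdisj (φ w).2), card_univ]
  obtain ⟨w, hw⟩ := invFun_surjective e.injective ⟨g, Fintype.mem_piFinset.mpr hg⟩
  exact hgL w (by simp [φ, hw])

theorem listChromNum_completeBipartiteGraph_eq_card_add_one_iff [Fintype W] :
    listChromNum (completeBipartiteGraph V W) = Fintype.card V + 1 ↔
      Fintype.card V ^ Fintype.card V ≤ Fintype.card W := by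
  classical
  rw [listChromNum_eq_succ_iff, and_iff_right isChoosable_completeBipartiteGraph_card_add_one]
  refine ⟨fun h => ?_, not_isChoosable_completeBipartiteGraph_card_of_le⟩
  by_contra! hlt
  exact h (isChoosable_completeBipartiteGraph_card_of_lt hlt)

end CompleteBipartite

theorem listChromNum_completeBipartite_eq_iff_general (n l : ℕ) :
    listChromNum (Knl n l) = n + 1 ↔ n ^ n ≤ l := by
  simpa [Knl] using
    listChromNum_completeBipartiteGraph_eq_card_add_one_iff (V := Fin n) (W := Fin l)

/-- Folklore: for `n, l ∈ ℕ`, `χ_ℓ(K_{n,l}) = n + 1` if and only if `l ≥ nⁿ`. -/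
theorem listChromNum_completeBipartite_eq_iff (n l : ℕ) (hn : 1 ≤ n) (hl : 1 ≤ l) :
    listChromNum (Knl n l) = n + 1 ↔ n ^ n ≤ l :=
  listChromNum_completeBipartite_eq_iff_general n l
end
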